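/- arXiv:2404.06943 — 8 statements merged into one kernel-verified Lean document; each statement's English description precedes it below -/
import Mathlib

section
/- Let X ⊆ ℝⁿ be a path-connected set, and suppose X = ⋃_{i∈I} B_i is a finite union where each B_i is C-Lipschitz normally embedded (i.e., the inner distance on B_i satisfies d_{B_i,inn}(x,y) ≤ C‖x−y‖ for all x,y ∈ B_i). Then the inner distance on X satisfies d_{X,inn}(x,y) ≤ (#I · C) · d_{X,diam}(x,y) for all x,y ∈ X, where d_{X,diam}(x,y) is the infimum of diameters of images of paths in X connecting x to y. -/
open Set Metric ENNReal

/-- The inner (length) distance on a subset `X` of a normed space. -/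
noncomputable def innerDist {E : Type*} [NormedAddCommGroup E] (X : Set E) (x y : E) : ℝ≥0∞ :=
  ⨅ γ ∈ {γ : ℝ → E | ContinuousOn γ (Set.Icc 0 1) ∧ γ 0 = x ∧ γ 1 = y ∧
      ∀ t ∈ Set.Icc (0:ℝ) 1, γ t ∈ X}, eVariationOn γ (Set.Icc 0 1)

/-- The diameter distance on a subset `X` of a normed space. -/
noncomputable def diamDist {E : Type*} [NormedAddCommGroup E] (X : Set E) (x y : E) : ℝ≥0∞ :=
  ⨅ γ ∈ {γ : ℝ → E | ContinuousOn γ (Set.Icc 0 1) ∧ γ 0 = x ∧ γ 1 = y ∧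
      ∀ t ∈ Set.Icc (0:ℝ) 1, γ t ∈ X}, EMetric.diam (γ '' Set.Icc (0:ℝ) 1)

/-!
Along a path `γ` in `X` from `x` to `y`, let `s` be the current time and pick a set `B i` that `γ`
meets at times arbitrarily close to `s` from the right (there is one since the cover is finite).
Let `T` be the last time at which `γ` meets `B i`. Both `γ s` and `γ T` lie in the closure of
`B i`, and the inner distance in `X` between two such points is at most `C` times their distance,
hence at most `C · diam (image γ)`. After `T` the path never meets `B i` again, so at most `#I`
such steps reach `y`, and taking the infimum over `γ` gives the bound.

The closure step needs paths in `X` ending at a limit point `p` of `B`: run infinitely many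
near-optimal paths in `B` between the terms of a sequence converging quickly to `p`, on the
intervals `[k, k + 1]`, and compress `[0, ∞]` onto `[0, 1]`.
-/

open Filter Topology NNReal

section Paths

variable {E : Type*} [TopologicalSpace E] {X : Set E} {x y : E} {γ : ℝ → E}

def IsPathIn (X : Set E) (x y : E) (γ : ℝ → E) : Prop :=
  ContinuousOn γ (Icc 0 1) ∧ γ 0 = x ∧ γ 1 = y ∧ ∀ t ∈ Icc (0:ℝ) 1, γ t ∈ X

theorem IsPathIn.reverse (h : IsPathIn X x y γ) : IsPathIn X y x (fun t ↦ γ (1 - t)) := by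
  obtain ⟨hc, h0, h1, hX⟩ := h
  have hmaps : MapsTo (fun t : ℝ ↦ 1 - t) (Icc 0 1) (Icc 0 1) :=
    fun t ⟨h0, h1⟩ ↦ ⟨by linarith, by linarith⟩
  exact ⟨hc.comp (by fun_prop) hmaps, by simpa using h1, by simpa using h0,
    fun t ht ↦ hX _ (hmaps ht)⟩

end Paths

theorem eVariationOn_reverse {E : Type*} [PseudoEMetricSpace E] (γ : ℝ → E) :
    eVariationOn (fun t ↦ γ (1 - t)) (Icc 0 1) = eVariationOn γ (Icc 0 1) := by
  have hanti : AntitoneOn (fun t : ℝ ↦ 1 - t) (Icc 0 1) := fun s _ t _ hst ↦ by simp only; linarith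
  rw [← Function.comp_def, eVariationOn.comp_eq_of_antitoneOn _ _ hanti, image_const_sub_Icc]
  norm_num

section Concat

variable {E : Type*} {γ : ℕ → ℝ → E} {f : ℝ → E} {p : E}

noncomputable def concatSeq (γ : ℕ → ℝ → E) (s : ℝ) : E := γ ⌊s⌋₊ (s - ⌊s⌋₊)

noncomputable def rayToIcc (f : ℝ → E) (p : E) (t : ℝ) : E :=
  if t < 1 then f ((1 - t)⁻¹ - 1) else p

theorem sub_natFloor_mem_Icc {s : ℝ} (hs : 0 ≤ s) : s - ⌊s⌋₊ ∈ Icc (0:ℝ) 1 :=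
  ⟨sub_nonneg.2 (Nat.floor_le hs), by linarith [Nat.lt_floor_add_one s]⟩

theorem concatSeq_eqOn (hjoin : ∀ k, γ k 1 = γ (k + 1) 0) (k : ℕ) :
    EqOn (concatSeq γ) (fun s ↦ γ k (s - k)) (Icc k (k + 1)) := by
  rintro s ⟨hks, hsk⟩
  rcases hsk.lt_or_eq with hlt | rfl
  · simp [concatSeq, Nat.floor_eq_on_Ico k s ⟨hks, hlt⟩]
  · have : ⌊(k:ℝ) + 1⌋₊ = k + 1 := by exact_mod_cast Nat.floor_natCast (k + 1)
    simp [concatSeq, this, hjoin]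

theorem monotoneOn_inv_one_sub_sub_one : MonotoneOn (fun t : ℝ ↦ (1 - t)⁻¹ - 1) (Iio 1) :=
  fun s _ t ht hst ↦ sub_le_sub_right (inv_anti₀ (sub_pos.2 ht) (by linarith)) 1

theorem mapsTo_inv_one_sub_sub_one : MapsTo (fun t : ℝ ↦ (1 - t)⁻¹ - 1) (Ico 0 1) (Ici 0) :=
  fun _ ht ↦ sub_nonneg.2 ((one_le_inv₀ (sub_pos.2 ht.2)).2 (by linarith [ht.1]))

theorem tendsto_inv_one_sub_sub_one : Tendsto (fun t : ℝ ↦ (1 - t)⁻¹ - 1) (𝓝[<] 1) atTop := by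
  have h : Tendsto (fun t : ℝ ↦ 1 - t) (𝓝[<] 1) (𝓝[>] 0) := by
    refine tendsto_nhdsWithin_iff.2 ⟨?_, eventually_nhdsWithin_of_forall fun t ht ↦
      mem_Ioi.2 (sub_pos.2 ht)⟩
    exact ((continuous_const.sub continuous_id).tendsto' 1 0 (sub_self 1)).mono_left
      nhdsWithin_le_nhds
  simpa only [Function.comp_def, sub_eq_add_neg] using
    tendsto_atTop_add_const_right _ (-1) (tendsto_inv_nhdsGT_zero.comp h)

theorem rayToIcc_zero : rayToIcc f p 0 = f 0 := by simp [rayToIcc]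

theorem rayToIcc_one : rayToIcc f p 1 = p := by simp [rayToIcc]

theorem rayToIcc_mem_image {t : ℝ} (ht : t ∈ Ico 0 1) : rayToIcc f p t ∈ f '' Ici 0 :=
  ⟨_, mapsTo_inv_one_sub_sub_one ht, (if_pos ht.2).symm⟩

section Topology

variable [TopologicalSpace E]

theorem continuousOn_concatSeq (hjoin : ∀ k, γ k 1 = γ (k + 1) 0)
    (hc : ∀ k, ContinuousOn (γ k) (Icc 0 1)) : ContinuousOn (concatSeq γ) (Ici 0) := by
  have hblock (k : ℕ) : ContinuousOn (concatSeq γ) (Icc k (k + 1)) :=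
    ((hc k).comp (by fun_prop) fun s hs ↦ ⟨by linarith [hs.1], by linarith [hs.2]⟩).congr
      (concatSeq_eqOn hjoin k)
  have hIcc (n : ℕ) : ContinuousOn (concatSeq γ) (Icc 0 n) := by
    induction n with
    | zero => simp
    | succ n ih =>
      rw [Nat.cast_succ, ← Icc_union_Icc_eq_Icc (Nat.cast_nonneg n) (by linarith)]
      exact ih.union_of_isClosed (hblock n) isClosed_Icc isClosed_Icc
  intro s hs
  refine (hIcc (⌊s⌋₊ + 1) s ⟨hs, ?_⟩).mono_of_mem_nhdsWithin ?_
  · exact_mod_cast (Nat.lt_floor_add_one s).le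
  · rw [← Ici_inter_Iic]
    exact inter_mem_nhdsWithin _ (Iic_mem_nhds (by exact_mod_cast Nat.lt_floor_add_one s))

theorem continuousWithinAt_rayToIcc_one (hp : Tendsto f atTop (𝓝 p)) :
    ContinuousWithinAt (rayToIcc f p) (Iic 1) 1 := by
  refine continuousWithinAt_Iio_iff_Iic.1 ?_
  rw [ContinuousWithinAt, rayToIcc_one]
  exact (hp.comp tendsto_inv_one_sub_sub_one).congr'
    (eventually_nhdsWithin_of_forall fun s hs ↦ (if_pos hs).symm)

theorem continuousOn_rayToIcc (hf : ContinuousOn f (Ici 0)) (hp : Tendsto f atTop (𝓝 p)) :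
    ContinuousOn (rayToIcc f p) (Icc 0 1) := by
  intro t ht
  rcases ht.2.lt_or_eq with h1 | rfl
  · have heq : rayToIcc f p =ᶠ[𝓝 t] fun s ↦ f ((1 - s)⁻¹ - 1) :=
      eventually_of_mem (Iio_mem_nhds h1) fun s hs ↦ if_pos hs
    have hφ : ContinuousAt (fun s : ℝ ↦ (1 - s)⁻¹ - 1) t :=
      ((continuousAt_const.sub continuousAt_id).inv₀ (sub_ne_zero.2 h1.ne')).sub continuousAt_const
    have hcomp : ContinuousWithinAt (f ∘ fun s ↦ (1 - s)⁻¹ - 1) (Ico 0 1) t :=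
      (hf _ (mapsTo_inv_one_sub_sub_one ⟨ht.1, h1⟩)).comp (f := fun s : ℝ ↦ (1 - s)⁻¹ - 1)
        hφ.continuousWithinAt mapsTo_inv_one_sub_sub_one
    refine (hcomp.congr_of_eventuallyEq (mem_nhdsWithin_of_mem_nhds heq) (if_pos h1))
      |>.mono_of_mem_nhdsWithin ?_
    exact mem_of_superset (inter_mem_nhdsWithin (Icc 0 1) (Iio_mem_nhds h1))
      fun s hs ↦ ⟨hs.1.1, hs.2⟩
  · exact (continuousWithinAt_rayToIcc_one hp).mono Icc_subset_Iic_self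

end Topology

variable [PseudoEMetricSpace E]

theorem eVariationOn_concatSeq_Icc_le (hjoin : ∀ k, γ k 1 = γ (k + 1) 0) (n : ℕ) :
    eVariationOn (concatSeq γ) (Icc 0 n) ≤ ∑ k ∈ Finset.range n, eVariationOn (γ k) (Icc 0 1) := by
  have hblock (k : ℕ) :
      eVariationOn (concatSeq γ) (Icc k (k + 1)) ≤ eVariationOn (γ k) (Icc 0 1) := by
    rw [eVariationOn.eq_of_eqOn (concatSeq_eqOn hjoin k)]
    exact eVariationOn.comp_le_of_monotoneOn (γ k) (fun s ↦ s - k)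
      (fun a _ b _ h ↦ by simp only; linarith) fun s hs ↦ ⟨by linarith [hs.1], by linarith [hs.2]⟩
  have hsum := eVariationOn.sum' (concatSeq γ) (I := fun k : ℕ ↦ (k : ℝ)) Nat.mono_cast (n := n)
  push_cast at hsum
  rw [← hsum]
  exact Finset.sum_le_sum fun k _ ↦ hblock k

theorem eVariationOn_concatSeq_le (hjoin : ∀ k, γ k 1 = γ (k + 1) 0) :
    eVariationOn (concatSeq γ) (Ici 0) ≤ ∑' k, eVariationOn (γ k) (Icc 0 1) := by
  rw [eVariationOn.eq_biSup_inter_Icc]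
  refine iSup₂_le fun ab _ ↦ ?_
  calc eVariationOn (concatSeq γ) (Ici 0 ∩ Icc ab.1 ab.2)
      ≤ eVariationOn (concatSeq γ) (Icc 0 ⌈ab.2⌉₊) :=
        eVariationOn.mono _ fun s hs ↦ ⟨hs.1, hs.2.2.trans (Nat.le_ceil _)⟩
    _ ≤ ∑ k ∈ Finset.range ⌈ab.2⌉₊, eVariationOn (γ k) (Icc 0 1) :=
        eVariationOn_concatSeq_Icc_le hjoin _
    _ ≤ ∑' k, eVariationOn (γ k) (Icc 0 1) := ENNReal.sum_le_tsum _

theorem tendsto_concatSeq_atTop (hx : Tendsto (fun k ↦ γ k 0) atTop (𝓝 p))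
    (hfin : ∑' k, eVariationOn (γ k) (Icc 0 1) ≠ ∞) : Tendsto (concatSeq γ) atTop (𝓝 p) := by
  rw [tendsto_iff_edist_tendsto_0] at hx ⊢
  have hbound : Tendsto (fun s : ℝ ↦ eVariationOn (γ ⌊s⌋₊) (Icc 0 1) + edist (γ ⌊s⌋₊ 0) p)
      atTop (𝓝 0) := by
    simpa only [add_zero, Function.comp_def] using
      ((ENNReal.tendsto_atTop_zero_of_tsum_ne_top hfin).add hx).comp
        (tendsto_nat_floor_atTop (α := ℝ))
  refine tendsto_of_tendsto_of_tendsto_of_le_of_le' tendsto_const_nhds hbound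
    (Eventually.of_forall fun _ ↦ zero_le) ?_
  filter_upwards [eventually_ge_atTop 0] with s hs
  exact (edist_triangle _ (γ ⌊s⌋₊ 0) _).trans (add_le_add
    (eVariationOn.edist_le _ (sub_natFloor_mem_Icc hs) (left_mem_Icc.2 zero_le_one)) le_rfl)

theorem eVariationOn_rayToIcc_le (hp : Tendsto f atTop (𝓝 p)) :
    eVariationOn (rayToIcc f p) (Icc 0 1) ≤ eVariationOn f (Ici 0) := by
  rw [← eVariationOn.eVariationOn_Ico_eq_Icc_of_continuousWithinAt
      (continuousWithinAt_rayToIcc_one hp)]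
  refine (eVariationOn.eq_of_eqOn (f' := f ∘ fun t ↦ (1 - t)⁻¹ - 1) fun t ht ↦ if_pos ht.2).trans_le
    ?_
  exact eVariationOn.comp_le_of_monotoneOn f _
    (monotoneOn_inv_one_sub_sub_one.mono Ico_subset_Iio_self) mapsTo_inv_one_sub_sub_one

end Concat

section InnerDist

variable {E : Type*} [NormedAddCommGroup E] {X Y : Set E} {x y p : E} {γ : ℝ → E}

theorem innerDist_le_eVariationOn (h : IsPathIn X x y γ) :
    innerDist X x y ≤ eVariationOn γ (Icc 0 1) :=
  iInf₂_le γ h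

theorem exists_isPathIn_eVariationOn_lt {c : ℝ≥0∞} (h : innerDist X x y < c) :
    ∃ γ, IsPathIn X x y γ ∧ eVariationOn γ (Icc 0 1) < c := by
  simp only [innerDist, iInf_lt_iff, exists_prop] at h
  exact h

theorem mem_of_innerDist_ne_top (h : innerDist X x y ≠ ∞) : y ∈ X := by
  obtain ⟨γ, ⟨-, -, rfl, hγX⟩, -⟩ := exists_isPathIn_eVariationOn_lt (lt_top_iff_ne_top.2 h)
  exact hγX 1 (right_mem_Icc.2 zero_le_one)

theorem innerDist_self (hx : x ∈ X) : innerDist X x x = 0 :=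
  nonpos_iff_eq_zero.1 <| (innerDist_le_eVariationOn (γ := fun _ ↦ x)
    ⟨continuousOn_const, rfl, rfl, fun _ _ ↦ hx⟩).trans_eq <|
    eVariationOn.constant_on (subsingleton_singleton.anti (image_subset_iff.2 fun _ _ ↦ rfl))

theorem innerDist_le_of_subset (h : X ⊆ Y) (x y : E) : innerDist Y x y ≤ innerDist X x y :=
  le_iInf₂ fun γ ⟨hc, h0, h1, hX⟩ ↦ iInf₂_le γ ⟨hc, h0, h1, fun t ht ↦ h (hX t ht)⟩

theorem innerDist_comm (X : Set E) (x y : E) : innerDist X x y = innerDist X y x := by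
  have key : ∀ a b : E, innerDist X b a ≤ innerDist X a b := fun a b ↦
    le_iInf₂ fun γ hγ ↦
      (innerDist_le_eVariationOn (IsPathIn.reverse hγ)).trans_eq (eVariationOn_reverse γ)
  exact le_antisymm (key y x) (key x y)

theorem innerDist_le_tsum_eVariationOn {x : ℕ → E} {γ : ℕ → ℝ → E}
    (hγ : ∀ k, IsPathIn Y (x k) (x (k + 1)) (γ k)) (hx : Tendsto x atTop (𝓝 p)) (hp : p ∈ Y) :
    innerDist Y (x 0) p ≤ ∑' k, eVariationOn (γ k) (Icc 0 1) := by
  by_cases hfin : ∑' k, eVariationOn (γ k) (Icc 0 1) = ∞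
  · simp [hfin]
  have hjoin (k : ℕ) : γ k 1 = γ (k + 1) 0 := (hγ k).2.2.1.trans (hγ (k + 1)).2.1.symm
  have hstart : (fun k ↦ γ k 0) = x := funext fun k ↦ (hγ k).2.1
  have hc := continuousOn_concatSeq hjoin fun k ↦ (hγ k).1
  have hlim := tendsto_concatSeq_atTop (hstart ▸ hx) hfin
  refine (innerDist_le_eVariationOn ⟨continuousOn_rayToIcc hc hlim, ?_, rayToIcc_one, ?_⟩).trans
    ((eVariationOn_rayToIcc_le hlim).trans (eVariationOn_concatSeq_le hjoin))
  · simp [rayToIcc_zero, concatSeq, (hγ 0).2.1]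
  · intro t ht
    rcases ht.2.lt_or_eq with h1 | rfl
    · obtain ⟨s, hs, hst⟩ := rayToIcc_mem_image (f := concatSeq γ) (p := p) ⟨ht.1, h1⟩
      rw [← hst]
      exact (hγ _).2.2.2 _ (sub_natFloor_mem_Icc hs)
    · rwa [rayToIcc_one]

theorem innerDist_le_tsum {x : ℕ → E} (hx : Tendsto x atTop (𝓝 p)) (hp : p ∈ Y) :
    innerDist Y (x 0) p ≤ ∑' k, innerDist Y (x k) (x (k + 1)) := by
  refine ENNReal.le_of_forall_pos_le_add fun ε hε hfin ↦ ?_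
  obtain ⟨δ, hδ, hδε⟩ := ENNReal.exists_pos_sum_of_countable (coe_ne_zero.2 hε.ne') ℕ
  have hpaths (k : ℕ) := exists_isPathIn_eVariationOn_lt <| ENNReal.lt_add_right
    (ne_top_of_le_ne_top hfin.ne (ENNReal.le_tsum k)) (coe_ne_zero.2 (hδ k).ne')
  choose γ hγ hlt using hpaths
  calc innerDist Y (x 0) p ≤ ∑' k, eVariationOn (γ k) (Icc 0 1) :=
        innerDist_le_tsum_eVariationOn hγ hx hp
    _ ≤ ∑' k, (innerDist Y (x k) (x (k + 1)) + δ k) := ENNReal.tsum_le_tsum fun k ↦ (hlt k).le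
    _ = ∑' k, innerDist Y (x k) (x (k + 1)) + ∑' k, (δ k : ℝ≥0∞) := ENNReal.tsum_add
    _ ≤ ∑' k, innerDist Y (x k) (x (k + 1)) + ε := add_le_add le_rfl hδε.le

theorem innerDist_triangle (X : Set E) (x y z : E) :
    innerDist X x z ≤ innerDist X x y + innerDist X y z := by
  by_cases hz : z ∈ X
  · let w : ℕ → E := fun k ↦ if k = 0 then x else if k = 1 then y else z
    have hw : ∀ k ≥ 2, w k = z := fun k hk ↦ by
      simp only [w]; rw [if_neg (by omega), if_neg (by omega)]
    have := innerDist_le_tsum (Y := X) (x := w) (tendsto_atTop_of_eventually_const hw) hz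
    rw [tsum_eq_sum (s := Finset.range 2) fun k hk ↦ by
      simp only [Finset.mem_range, not_lt] at hk
      rw [hw k hk, hw (k + 1) (by omega), innerDist_self hz]] at this
    simpa [Finset.sum_range_succ, w] using this
  · have : innerDist X y z = ∞ := by_contra fun h ↦ hz (mem_of_innerDist_ne_top h)
    simp [this]

end InnerDist

theorem exists_seq_tendsto_tsum_edist_le {α : Type*} [PseudoEMetricSpace α] {B : Set α} {p : α}
    (q : α) (hp : p ∈ closure B) {η : ℝ≥0∞} (hη : η ≠ 0) :
    ∃ x : ℕ → α, x 0 = q ∧ (∀ k, x (k + 1) ∈ B) ∧ Tendsto x atTop (𝓝 p) ∧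
      ∑' k, edist (x k) (x (k + 1)) ≤ edist q p + η := by
  -- the cap `1` keeps `∑' δ` finite, so that `δ k → 0` even when `η = ∞`
  obtain ⟨δ, hδ, hδη⟩ := ENNReal.exists_pos_sum_of_countable
    (lt_min (ENNReal.half_pos hη) one_pos).ne' ℕ
  choose y hyB hyp using fun k ↦ EMetric.mem_closure_iff.1 hp (δ k) (coe_pos.2 (hδ k))
  have hy : ∑' k, edist (y k) p ≤ min (η / 2) 1 :=
    (ENNReal.tsum_le_tsum fun k ↦ (edist_comm (y k) p).trans_le (hyp k).le).trans hδη.le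
  let x : ℕ → α := fun | 0 => q | k + 1 => y k
  refine ⟨x, rfl, hyB, ?_, ?_⟩
  · refine (tendsto_add_atTop_iff_nat 1).1 (tendsto_iff_edist_tendsto_0.2 ?_)
    exact ENNReal.tendsto_atTop_zero_of_tsum_ne_top
      ((hy.trans (min_le_right _ _)).trans_lt one_lt_top).ne
  calc ∑' k, edist (x k) (x (k + 1)) ≤ ∑' k, (edist (x k) p + edist (y k) p) :=
        ENNReal.tsum_le_tsum fun k ↦ (edist_triangle _ p _).trans_eq (by rw [edist_comm p])
    _ = edist q p + ∑' k, edist (y k) p + ∑' k, edist (y k) p := by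
        rw [ENNReal.tsum_add, tsum_eq_zero_add' ENNReal.summable]
    _ ≤ edist q p + η / 2 + η / 2 := by
        gcongr <;> exact hy.trans (min_le_left _ _)
    _ = edist q p + η := by rw [add_assoc, ENNReal.add_halves]

section LNE

variable {E : Type*} [NormedAddCommGroup E] {K : ℝ≥0} {B Y : Set E} {p q : E}

def LipschitzNormallyEmbedded (K : ℝ≥0) (B : Set E) : Prop :=
  ∀ x ∈ B, ∀ y ∈ B, innerDist B x y ≤ K * edist x y

namespace LipschitzNormallyEmbedded

theorem innerDist_le_of_mem_closure_right (hB : LipschitzNormallyEmbedded K B) (hBY : B ⊆ Y)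
    (hq : q ∈ B) (hp : p ∈ closure B) (hpY : p ∈ Y) : innerDist Y q p ≤ K * edist q p := by
  refine ENNReal.le_of_forall_pos_le_add fun ε hε _ ↦ ?_
  -- for `K = 0` this takes `η = ε / 0 = ∞`
  obtain ⟨x, rfl, hxB, hx, hsum⟩ := exists_seq_tendsto_tsum_edist_le q hp (η := ε / K)
    (ENNReal.div_ne_zero.2 ⟨coe_ne_zero.2 hε.ne', coe_ne_top⟩)
  have hxB' : ∀ k, x k ∈ B := fun | 0 => hq | k + 1 => hxB k
  calc innerDist Y (x 0) p ≤ ∑' k, innerDist Y (x k) (x (k + 1)) := innerDist_le_tsum hx hpY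
    _ ≤ ∑' k, K * edist (x k) (x (k + 1)) := ENNReal.tsum_le_tsum fun k ↦
        (innerDist_le_of_subset hBY _ _).trans (hB _ (hxB' k) _ (hxB' (k + 1)))
    _ = K * ∑' k, edist (x k) (x (k + 1)) := ENNReal.tsum_mul_left
    _ ≤ K * (edist (x 0) p + ε / K) := by gcongr
    _ ≤ K * edist (x 0) p + ε := by rw [mul_add]; exact add_le_add le_rfl ENNReal.mul_div_le

theorem innerDist_le_of_mem_closure (hB : LipschitzNormallyEmbedded K B) (hBY : B ⊆ Y)
    (hp : p ∈ closure B) (hq : q ∈ closure B) (hpY : p ∈ Y) (hqY : q ∈ Y) :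
    innerDist Y p q ≤ K * edist p q := by
  have := mem_closure_iff_nhdsWithin_neBot.1 hp
  have hcont : Continuous fun u ↦ (K : ℝ≥0∞) * edist u p + K * edist u q :=
    ((ENNReal.continuous_const_mul coe_ne_top).comp (continuous_id.edist continuous_const)).add
      ((ENNReal.continuous_const_mul coe_ne_top).comp (continuous_id.edist continuous_const))
  have hlim : Tendsto (fun u ↦ (K : ℝ≥0∞) * edist u p + K * edist u q) (𝓝[B] p)
      (𝓝 (K * edist p q)) := by
    simpa using (hcont.tendsto p).mono_left nhdsWithin_le_nhds
  refine ge_of_tendsto hlim (eventually_nhdsWithin_of_forall fun u hu ↦ ?_)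
  calc innerDist Y p q ≤ innerDist Y u p + innerDist Y u q := by
        rw [innerDist_comm Y u p]; exact innerDist_triangle Y p u q
    _ ≤ K * edist u p + K * edist u q :=
        add_le_add (hB.innerDist_le_of_mem_closure_right hBY hu hp hpY)
          (hB.innerDist_le_of_mem_closure_right hBY hu hq hqY)

end LipschitzNormallyEmbedded

end LNE

section Cover

variable {α ι : Type*} {γ : ℝ → α} {B : ι → Set α} {J : Finset ι} {s : ℝ}

theorem exists_mem_closure_setOf_mem (hs : s < 1) (hJ : ∀ t ∈ Ioc s 1, γ t ∈ ⋃ i ∈ J, B i) :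
    ∃ i ∈ J, s ∈ closure {t ∈ Ioc s 1 | γ t ∈ B i} := by
  have hcover : Ioc s 1 ⊆ ⋃ i ∈ J, {t ∈ Ioc s 1 | γ t ∈ B i} := fun t ht ↦ by
    obtain ⟨i, hi, hti⟩ := mem_iUnion₂.1 (hJ t ht)
    exact mem_iUnion₂.2 ⟨i, hi, ht, hti⟩
  have hs_mem : s ∈ closure (Ioc s 1) := by
    rw [closure_Ioc hs.ne]; exact left_mem_Icc.2 hs.le
  simpa [Finset.closure_biUnion] using closure_mono hcover hs_mem

variable [TopologicalSpace α] [DecidableEq ι]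

theorem exists_last_exit (hγ : ContinuousOn γ (Icc 0 1)) (hs : s ∈ Icc 0 1) (hs1 : s < 1)
    (hJ : ∀ t ∈ Ioc s 1, γ t ∈ ⋃ i ∈ J, B i) :
    ∃ i ∈ J, ∃ T ∈ Icc s 1, γ s ∈ closure (B i) ∧ γ T ∈ closure (B i) ∧
      ∀ t ∈ Ioc T 1, γ t ∈ ⋃ j ∈ J.erase i, B j := by
  obtain ⟨i, hiJ, hsS⟩ := exists_mem_closure_setOf_mem hs1 hJ
  set S := {t ∈ Ioc s 1 | γ t ∈ B i}
  obtain ⟨t₀, ht₀⟩ : S.Nonempty := closure_nonempty_iff.1 ⟨s, hsS⟩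
  have hbdd : BddAbove S := ⟨1, fun t ht ↦ ht.1.2⟩
  have hsT : s ≤ sSup S := ht₀.1.1.le.trans (le_csSup hbdd ht₀)
  have hT1 : sSup S ≤ 1 := csSup_le ⟨t₀, ht₀⟩ fun t ht ↦ ht.1.2
  have hclS : closure S ⊆ Icc 0 1 :=
    closure_minimal (fun t ht ↦ ⟨hs.1.trans ht.1.1.le, ht.1.2⟩) isClosed_Icc
  have himage : γ '' closure S ⊆ closure (B i) :=
    ((hγ.mono hclS).image_closure).trans (closure_mono (image_subset_iff.2 fun t ht ↦ ht.2))
  refine ⟨i, hiJ, sSup S, ⟨hsT, hT1⟩, himage ⟨s, hsS, rfl⟩,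
    himage ⟨_, csSup_mem_closure ⟨t₀, ht₀⟩ hbdd, rfl⟩, fun t ht ↦ ?_⟩
  obtain ⟨j, hj, htj⟩ := mem_iUnion₂.1 (hJ t ⟨hsT.trans_lt ht.1, ht.2⟩)
  have hji : j ≠ i := by
    rintro rfl
    exact (le_csSup hbdd ⟨⟨hsT.trans_lt ht.1, ht.2⟩, htj⟩).not_gt ht.1
  exact mem_iUnion₂.2 ⟨j, Finset.mem_erase.2 ⟨hji, hj⟩, htj⟩

end Cover

section Main

variable {E ι : Type*} [NormedAddCommGroup E] {X : Set E} {B : ι → Set E} {K : ℝ≥0} {γ : ℝ → E}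

theorem innerDist_le_card_mul_ediam_of_cover [DecidableEq ι] (hBX : ∀ i, B i ⊆ X)
    (hB : ∀ i, LipschitzNormallyEmbedded K (B i)) (hγ : ContinuousOn γ (Icc 0 1))
    (hγX : ∀ t ∈ Icc 0 1, γ t ∈ X) (J : Finset ι) {s : ℝ} (hs : s ∈ Icc 0 1)
    (hJ : ∀ t ∈ Ioc s 1, γ t ∈ ⋃ i ∈ J, B i) :
    innerDist X (γ s) (γ 1) ≤ J.card * K * ediam (γ '' Icc 0 1) := by
  induction J using Finset.strongInduction generalizing s with
  | H J ih =>
  rcases hs.2.lt_or_eq with hs1 | rfl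
  · obtain ⟨i, hiJ, T, hT, hsi, hTi, hTJ⟩ := exists_last_exit hγ hs hs1 hJ
    have hT' : T ∈ Icc 0 1 := ⟨hs.1.trans hT.1, hT.2⟩
    have hstep : innerDist X (γ s) (γ T) ≤ K * ediam (γ '' Icc 0 1) := by
      refine ((hB i).innerDist_le_of_mem_closure (hBX i) hsi hTi (hγX s hs) (hγX T hT')).trans ?_
      gcongr
      exact edist_le_ediam_of_mem (mem_image_of_mem γ hs) (mem_image_of_mem γ hT')
    calc innerDist X (γ s) (γ 1) ≤ innerDist X (γ s) (γ T) + innerDist X (γ T) (γ 1) :=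
          innerDist_triangle X _ _ _
      _ ≤ K * ediam (γ '' Icc 0 1) + (J.erase i).card * K * ediam (γ '' Icc 0 1) :=
          add_le_add hstep (ih _ (Finset.erase_ssubset hiJ) hT' hTJ)
      _ = J.card * K * ediam (γ '' Icc 0 1) := by
          rw [← Finset.card_erase_add_one hiJ]; push_cast; ring
  · rw [innerDist_self (hγX 1 hs)]
    exact zero_le

theorem innerDist_le_card_mul_ediam [Fintype ι] (hX : X = ⋃ i, B i)
    (hB : ∀ i, LipschitzNormallyEmbedded K (B i)) {x y : E} (hγ : IsPathIn X x y γ) :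
    innerDist X x y ≤ Fintype.card ι * K * ediam (γ '' Icc 0 1) := by
  classical
  obtain ⟨hc, rfl, rfl, hγX⟩ := hγ
  refine innerDist_le_card_mul_ediam_of_cover (fun i ↦ hX ▸ subset_iUnion B i) hB hc hγX
    Finset.univ (left_mem_Icc.2 zero_le_one) fun t ht ↦ ?_
  simpa [hX] using hγX t (Ioc_subset_Icc_self ht)

theorem innerDist_le_mul_diamDist {x y : E} {c : ℝ≥0∞} (hc0 : c ≠ 0) (hc : c ≠ ∞)
    (h : ∀ γ, IsPathIn X x y γ → innerDist X x y ≤ c * ediam (γ '' Icc 0 1)) :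
    innerDist X x y ≤ c * diamDist X x y := by
  simp only [diamDist, ENNReal.mul_iInf_of_ne hc0 hc]
  exact le_iInf₂ h

end Main

theorem stmt_0_general {n : ℕ} (X : Set (EuclideanSpace ℝ (Fin n)))
    {I : Type*} [Fintype I] (B : I → Set (EuclideanSpace ℝ (Fin n)))
    (hunion : X = ⋃ i, B i) (C : ℝ) (hC : 0 < C)
    (hLNE : ∀ i, ∀ x ∈ B i, ∀ y ∈ B i, innerDist (B i) x y ≤ ENNReal.ofReal (C * ‖x - y‖)) :
    ∀ x ∈ X, ∀ y ∈ X,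
      innerDist X x y ≤ (Fintype.card I : ℝ≥0∞) * ENNReal.ofReal C * diamDist X x y := by
  intro x hx y _
  have hB (i : I) : LipschitzNormallyEmbedded C.toNNReal (B i) := fun a ha b hb ↦
    (hLNE i a ha b hb).trans_eq <| by
      rw [ENNReal.ofReal_mul' (norm_nonneg _), ← dist_eq_norm, ← edist_dist]; rfl
  have : Nonempty I := let ⟨i, _⟩ := mem_iUnion.1 (hunion ▸ hx); ⟨i⟩
  exact innerDist_le_mul_diamDist
    (mul_ne_zero (Nat.cast_ne_zero.2 Fintype.card_ne_zero) (ENNReal.ofReal_pos.2 hC).ne')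
    (mul_ne_top (natCast_ne_top _) ofReal_ne_top)
    fun _ hγ ↦ innerDist_le_card_mul_ediam hunion hB hγ

/-- If the path-connected set `X ⊆ ℝⁿ` is a finite union `X = ⋃ i, B i` where each `B i` is
`C`-Lipschitz normally embedded, then `d_{X,inn} ≤ (#I · C) · d_{X,diam}` on `X`. -/
theorem stmt_0 {n : ℕ} (X : Set (EuclideanSpace ℝ (Fin n))) (hX : IsPathConnected X)
    {I : Type*} [Fintype I] (B : I → Set (EuclideanSpace ℝ (Fin n)))
    (hunion : X = ⋃ i, B i) (C : ℝ) (hC : 0 < C)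
    (hLNE : ∀ i, ∀ x ∈ B i, ∀ y ∈ B i, innerDist (B i) x y ≤ ENNReal.ofReal (C * ‖x - y‖)) :
    ∀ x ∈ X, ∀ y ∈ X,
      innerDist X x y ≤ (Fintype.card I : ℝ≥0∞) * ENNReal.ofReal C * diamDist X x y :=
  stmt_0_general X B hunion C hC hLNE
end

section
/- Let X ⊆ ℂⁿ and Y ⊆ ℂ^d, and suppose φ : X → Y is a bi-α-Hölder homeomorphism. Then there exist α-Hölder maps φ̃ : ℂⁿ → ℂ^d and ψ̃ : ℂ^d → ℂⁿ extending φ and φ⁻¹ respectively, and the maps φ̂(x,y) = (x − ψ̃(y + φ̃(x)), y + φ̃(x)) and ψ̂(z,w) = (z + ψ̃(w), w − φ̃(z + ψ̃(w))) from ℂⁿ × ℂ^d to itself are α²-Hölder, mutually inverse, and φ̂ maps X × {0} onto {0} × Y. -/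
/-!
An `α`-Hölder map into a finite-dimensional real normed space extends from any subset with the
same exponent: on the `α`-snowflaking of the domain it is Lipschitz, and Lipschitz maps extend
(McShane, coordinatewise). The map `Φ` is the composite of the shears `(x, y) ↦ (x, y + φ̃ x)` and
`(z, w) ↦ (z - ψ̃ w, w)`, and `Ψ` composes their inverses in the opposite order; on `X × {0}`
the extensions reduce to the mutually inverse `φ` and `ψ`. Every coordinate of `Φ` and `Ψ` is
built from Lipschitz maps, `α`-Hölder maps and one composite of two `α`-Hölder maps, and on a
bounded set a Hölder map is also Hölder for every smaller exponent, so `Φ` and `Ψ` are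
`α²`-Hölder on bounded sets.
-/

open Set Metric Bornology NNReal

open Metric.Snowflaking in
theorem HolderOnWith.extend_finite_dimension {X : Type*} [PseudoMetricSpace X] {E : Type*}
    [NormedAddCommGroup E] [NormedSpace ℝ E] [FiniteDimensional ℝ E] {s : Set X} {f : X → E}
    {C r : ℝ≥0} (hr₀ : 0 < r) (hr₁ : r ≤ 1) (hf : HolderOnWith C r f s) :
    ∃ g : X → E, HolderWith (lipschitzExtensionConstant E * C) r g ∧ EqOn f g s := by
  have hf' : LipschitzOnWith C
      (f ∘ ofSnowflaking (hα₀ := NNReal.coe_pos.mpr hr₀) (hα₁ := NNReal.coe_le_one.mpr hr₁))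
      (ofSnowflaking ⁻¹' s) :=
    fun x hx y hy => hf _ hx _ hy
  obtain ⟨g, hg, hfg⟩ := hf'.extend_finite_dimension
  exact ⟨g ∘ toSnowflaking, fun x y => hg (toSnowflaking x) (toSnowflaking y),
    fun x hx => hfg (x := toSnowflaking x) hx⟩

section PseudoEMetricSpace

variable {X Y Z : Type*} [PseudoEMetricSpace X] [PseudoEMetricSpace Y] [PseudoEMetricSpace Z]
  {r : ℝ≥0}

theorem HolderWith.prodMk {C₁ C₂ : ℝ≥0} {f : X → Y} {g : X → Z} (hf : HolderWith C₁ r f)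
    (hg : HolderWith C₂ r g) : HolderWith (max C₁ C₂) r fun x => (f x, g x) := fun x y => by
  rw [Prod.edist_eq]
  exact max_le ((hf x y).trans (by gcongr; exact le_max_left _ _))
    ((hg x y).trans (by gcongr; exact le_max_right _ _))

theorem MemHolder.prodMk {f : X → Y} {g : X → Z} (hf : MemHolder r f) (hg : MemHolder r g) :
    MemHolder r fun x => (f x, g x) :=
  let ⟨_, hf⟩ := hf
  let ⟨_, hg⟩ := hg
  (hf.prodMk hg).memHolder

theorem LipschitzWith.memHolder_one {K : ℝ≥0} {f : X → Y} (hf : LipschitzWith K f) :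
    MemHolder 1 f :=
  (holderWith_one.mpr hf).memHolder

theorem memHolder_one_fst_val (S : Set (X × Y)) : MemHolder 1 fun p : S => p.1.1 :=
  (LipschitzWith.prod_fst.comp (LipschitzWith.subtype_val S)).memHolder_one

theorem memHolder_one_snd_val (S : Set (X × Y)) : MemHolder 1 fun p : S => p.1.2 :=
  (LipschitzWith.prod_snd.comp (LipschitzWith.subtype_val S)).memHolder_one

end PseudoEMetricSpace

theorem MemHolder.neg {X Y : Type*} [PseudoEMetricSpace X] [SeminormedAddCommGroup Y] {r : ℝ≥0}
    {f : X → Y} (hf : MemHolder r f) : MemHolder r (-f) :=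
  let ⟨C, hf⟩ := hf
  ⟨C, fun x y => by simpa only [Pi.neg_apply, edist_neg_neg] using hf x y⟩

theorem MemHolder.sub {X Y : Type*} [MetricSpace X] [NormedAddCommGroup Y] {r : ℝ≥0}
    {f g : X → Y} (hf : MemHolder r f) (hg : MemHolder r g) : MemHolder r (f - g) := by
  simpa only [sub_eq_add_neg] using hf.add hg.neg

section AddGroup

variable {A B : Type*} [AddGroup A] [AddGroup B] (f : A → B) (g : B → A)

def doubleShear (p : A × B) : A × B :=
  (p.1 - g (p.2 + f p.1), p.2 + f p.1)

def doubleShearInv (q : A × B) : A × B :=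
  (q.1 + g q.2, q.2 - f (q.1 + g q.2))

theorem leftInverse_doubleShearInv :
    Function.LeftInverse (doubleShearInv f g) (doubleShear f g) :=
  fun p => by simp [doubleShear, doubleShearInv]

theorem rightInverse_doubleShearInv :
    Function.RightInverse (doubleShearInv f g) (doubleShear f g) :=
  fun q => by simp [doubleShear, doubleShearInv]

theorem image_doubleShear_prod_zero {X : Set A} {Y : Set B} (hf : MapsTo f X Y)
    (hg : MapsTo g Y X) (hgf : InvOn g f X Y) : doubleShear f g '' (X ×ˢ {0}) = {0} ×ˢ Y := by
  ext ⟨z, w⟩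
  simp only [mem_image, mem_prod, mem_singleton_iff, Prod.exists, doubleShear, Prod.mk.injEq]
  constructor
  · rintro ⟨x, _, ⟨hx, rfl⟩, rfl, rfl⟩
    simp [hgf.1 hx, hf hx]
  · rintro ⟨rfl, hw⟩
    exact ⟨g w, 0, ⟨hg hw, rfl⟩, by simp [hgf.2 hw]⟩

end AddGroup

section NormedAddCommGroup

variable {A B : Type*} [NormedAddCommGroup A] [NormedAddCommGroup B] {f : A → B} {g : B → A}
  {r : ℝ≥0} {S : Set (A × B)}

theorem memHolder_domRestrict_doubleShear (hf : MemHolder r f) (hg : MemHolder r g)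
    (hr : r ≤ 1) (hS : IsBounded S) : MemHolder (r * r) (S.domRestrict (doubleShear f g)) := by
  have : BoundedSpace S := boundedSpace_val_set_iff.mpr hS
  have hfst := memHolder_one_fst_val S
  have hsnd := memHolder_one_snd_val S
  have hu : MemHolder r fun p : S => p.1.2 + f p.1.1 :=
    (hsnd.of_le hr).add (mul_one r ▸ hfst.comp hf)
  have hfst' : MemHolder (r * r) fun p : S => p.1.1 := hfst.of_le (mul_le_one' hr hr)
  exact (hfst'.sub (hu.comp hg)).prodMk (hu.of_le (mul_le_of_le_one_left' hr))

theorem memHolder_domRestrict_doubleShearInv (hf : MemHolder r f) (hg : MemHolder r g)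
    (hr : r ≤ 1) (hS : IsBounded S) : MemHolder (r * r) (S.domRestrict (doubleShearInv f g)) := by
  have : BoundedSpace S := boundedSpace_val_set_iff.mpr hS
  have hfst := memHolder_one_fst_val S
  have hsnd := memHolder_one_snd_val S
  have hv : MemHolder r fun q : S => q.1.1 + g q.1.2 :=
    (hfst.of_le hr).add (mul_one r ▸ hsnd.comp hg)
  have hsnd' : MemHolder (r * r) fun q : S => q.1.2 := hsnd.of_le (mul_le_one' hr hr)
  exact (hv.of_le (mul_le_of_le_one_left' hr)).prodMk (hsnd'.sub (hv.comp hf))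

end NormedAddCommGroup

/-- Given a bi-α-Hölder homeomorphism `φ : X → Y` (with inverse `ψ`) between `X ⊆ ℂⁿ` and
`Y ⊆ ℂ^d`, there are α-Hölder extensions `φ̃ : ℂⁿ → ℂ^d` and `ψ̃ : ℂ^d → ℂⁿ` of `φ` and `ψ`,
such that the maps `Φ(x,y) = (x − ψ̃(y + φ̃ x), y + φ̃ x)` and
`Ψ(z,w) = (z + ψ̃ w, w − φ̃(z + ψ̃ w))` of `ℂⁿ × ℂ^d` are mutually inverse, `α²`-Hölder
(on bounded sets), and `Φ` maps `X × {0}` onto `{0} × Y`. -/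
theorem stmt_3 {n d : ℕ}
    (X : Set (EuclideanSpace ℂ (Fin n))) (Y : Set (EuclideanSpace ℂ (Fin d)))
    (α : ℝ≥0) (hα0 : 0 < α) (hα1 : α ≤ 1) (C : ℝ≥0)
    (φ : EuclideanSpace ℂ (Fin n) → EuclideanSpace ℂ (Fin d))
    (ψ : EuclideanSpace ℂ (Fin d) → EuclideanSpace ℂ (Fin n))
    (hφY : MapsTo φ X Y) (hψX : MapsTo ψ Y X)
    (hli : ∀ x ∈ X, ψ (φ x) = x) (hri : ∀ y ∈ Y, φ (ψ y) = y)
    (hφH : HolderOnWith C α φ X) (hψH : HolderOnWith C α ψ Y) :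
    ∃ (C' : ℝ≥0) (φt : EuclideanSpace ℂ (Fin n) → EuclideanSpace ℂ (Fin d))
      (ψt : EuclideanSpace ℂ (Fin d) → EuclideanSpace ℂ (Fin n)),
      HolderWith C' α φt ∧ HolderWith C' α ψt ∧ EqOn φt φ X ∧ EqOn ψt ψ Y ∧
      (let Φ : EuclideanSpace ℂ (Fin n) × EuclideanSpace ℂ (Fin d) →
          EuclideanSpace ℂ (Fin n) × EuclideanSpace ℂ (Fin d) :=
        fun p => (p.1 - ψt (p.2 + φt p.1), p.2 + φt p.1)
      let Ψ : EuclideanSpace ℂ (Fin n) × EuclideanSpace ℂ (Fin d) →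
          EuclideanSpace ℂ (Fin n) × EuclideanSpace ℂ (Fin d) :=
        fun q => (q.1 + ψt q.2, q.2 - φt (q.1 + ψt q.2))
      Function.LeftInverse Ψ Φ ∧ Function.RightInverse Ψ Φ ∧
        Φ '' (X ×ˢ ({0} : Set (EuclideanSpace ℂ (Fin d)))) =
          ({0} : Set (EuclideanSpace ℂ (Fin n))) ×ˢ Y ∧
        ∀ S : Set (EuclideanSpace ℂ (Fin n) × EuclideanSpace ℂ (Fin d)), IsBounded S →
          ∃ C'' : ℝ≥0, HolderOnWith C'' (α * α) Φ S ∧ HolderOnWith C'' (α * α) Ψ S) := by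
  obtain ⟨φt, hφt, hφφt⟩ := hφH.extend_finite_dimension hα0 hα1
  obtain ⟨ψt, hψt, hψψt⟩ := hψH.extend_finite_dimension hα0 hα1
  set C' := max (lipschitzExtensionConstant (EuclideanSpace ℂ (Fin d)) * C)
    (lipschitzExtensionConstant (EuclideanSpace ℂ (Fin n)) * C)
  have hφt' : HolderWith C' α φt := hφt.mono (le_max_left _ _)
  have hψt' : HolderWith C' α ψt := hψt.mono (le_max_right _ _)
  have hinv : InvOn ψt φt X Y :=
    ⟨fun x hx => by rw [← hφφt hx, ← hψψt (hφY hx), hli x hx],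
      fun y hy => by rw [← hψψt hy, ← hφφt (hψX hy), hri y hy]⟩
  refine ⟨C', φt, ψt, hφt', hψt', hφφt.symm, hψψt.symm, leftInverse_doubleShearInv φt ψt,
    rightInverse_doubleShearInv φt ψt,
    image_doubleShear_prod_zero φt ψt (hφY.congr hφφt) (hψX.congr hψψt) hinv, fun S hS => ?_⟩
  obtain ⟨C₁, hΦ⟩ := memHolder_domRestrict_doubleShear hφt'.memHolder hψt'.memHolder hα1 hS
  obtain ⟨C₂, hΨ⟩ := memHolder_domRestrict_doubleShearInv hφt'.memHolder hψt'.memHolder hα1 hS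
  exact ⟨max C₁ C₂, (HolderWith.restrict_iff.mp hΦ).mono_const (le_max_left _ _),
    (HolderWith.restrict_iff.mp hΨ).mono_const (le_max_right _ _)⟩
end

section
/- Let f : ℝ → ℝ be defined by f(x) = |x|·|log|x|| for x ≠ 0 and f(0) = 0, and let X = Graph(f) ⊆ ℝ². Then the restriction to X of the projection onto the first coordinate, π : X → ℝ, π(x, f(x)) = x, is a bi-log-Lipschitz homeomorphism. In particular X is log-Lipschitz regular at 0. -/
open Set Metric

/-- `f(x) = |x|·|log |x||` (with `f(0) = 0`, since `Real.log 0 = 0`). -/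
noncomputable def flog (x : ℝ) : ℝ := |x| * abs (Real.log |x|)

lemma flog_eq {x : ℝ} (hx : |x| ≤ 1/4) : flog x = |x| * (-Real.log |x|) := by
  rcases eq_or_ne x 0 with h | h
  · simp [flog, h]
  · have h1 : Real.log |x| < 0 := Real.log_neg (abs_pos.mpr h) (by linarith)
    rw [flog, abs_of_neg h1]

/-- key discrete estimate for g(t) = -t log t on [0,1/4] -/
lemma key {u v : ℝ} (hv : 0 ≤ v) (hvu : v ≤ u) (hu : u ≤ 1/4) :
    |u * (-Real.log u) - v * (-Real.log v)| ≤
      (u - v) * (-Real.log (u - v)) + (u - v) := by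
  rcases eq_or_lt_of_le hvu with rfl | hlt
  · simp
  have hu0 : 0 < u := lt_of_le_of_lt hv hlt
  have hs0 : 0 < u - v := by linarith
  have hlogu : Real.log u < 0 := Real.log_neg hu0 (by linarith)
  have hlogs : Real.log (u - v) ≤ Real.log u := Real.log_le_log hs0 (by linarith)
  have hlogs0 : Real.log (u - v) < 0 := Real.log_neg hs0 (by linarith)
  rcases eq_or_lt_of_le hv with rfl | hv0
  · rw [abs_of_nonneg (by nlinarith)]
    simp only [sub_zero, mul_zero]
    nlinarith
  · have hlogv : Real.log v ≤ Real.log u := Real.log_le_log hv0 hvu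
    have hld : Real.log (u / v) ≤ u / v - 1 := Real.log_le_sub_one_of_pos (by positivity)
    have hld' : v * (Real.log u - Real.log v) ≤ u - v := by
      rw [← Real.log_div (ne_of_gt hu0) (ne_of_gt hv0)] 
      have := mul_le_mul_of_nonneg_left hld hv
      calc v * Real.log (u / v) ≤ v * (u / v - 1) := this
        _ = u - v := by field_simp
    rw [abs_le]
    constructor
    · -- lower bound: -(u(-log u) - v(-log v)) ≤ s + s(-log s)
      nlinarith [mul_nonneg hs0.le (neg_nonneg.mpr hlogu.le),
        mul_nonneg hs0.le (neg_nonneg.mpr hlogs0.le)]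
    · -- upper bound
      nlinarith [mul_nonneg hv (sub_nonneg.mpr hlogv),
        mul_le_mul_of_nonneg_left hlogs hs0.le]

lemma gmono {s d : ℝ} (hs : 0 < s) (hsd : s ≤ d) (hd : d < 1/2) :
    s * (-Real.log s) ≤ d * (-Real.log d) + d := by
  have hd0 : 0 < d := lt_of_lt_of_le hs hsd
  have hlogd : Real.log d < 0 := Real.log_neg hd0 (by linarith)
  have hld : Real.log (d / s) ≤ d / s - 1 := Real.log_le_sub_one_of_pos (by positivity)
  have h1 : s * (Real.log d - Real.log s) ≤ d - s := by
    rw [← Real.log_div (ne_of_gt hd0) (ne_of_gt hs)]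
    have := mul_le_mul_of_nonneg_left hld hs.le
    calc s * Real.log (d / s) ≤ s * (d / s - 1) := this
      _ = d - s := by field_simp
  nlinarith [mul_le_mul_of_nonneg_right hsd (neg_nonneg.mpr hlogd.le)]

lemma log_half_bound {d : ℝ} (hd0 : 0 < d) (hd : d < 1/2) : (1:ℝ)/2 ≤ -Real.log d := by
  have h1 : Real.log d ≤ Real.log (1/2) := Real.log_le_log hd0 hd.le
  have h2 : Real.log (1/2) = -Real.log 2 := by
    rw [one_div, Real.log_inv]
  have := Real.log_two_gt_d9
  linarith [h1, h2 ▸ h1]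

lemma main_est {x y : ℝ} (hx : |x| ≤ 1/4) (hy : |y| ≤ 1/4)
    (hd : 0 < |x - y|) (hd2 : |x - y| < 1/2) :
    |flog x - flog y| ≤ 5 * |x - y| * (-Real.log |x - y|) := by
  wlog hxy : |y| ≤ |x| generalizing x y
  · have := this hy hx (by rwa [abs_sub_comm]) (by rwa [abs_sub_comm]) (le_of_not_ge hxy)
    rwa [abs_sub_comm y x, abs_sub_comm (flog y)] at this
  set d := |x - y| with hdd
  have hlb : (1:ℝ)/2 ≤ -Real.log d := log_half_bound hd hd2
  have hsd : |x| - |y| ≤ d := by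
    have := abs_sub_abs_le_abs_sub x y
    linarith
  rw [flog_eq hx, flog_eq hy]
  have hk := key (abs_nonneg y) hxy hx
  rcases eq_or_lt_of_le (sub_nonneg.mpr hxy) with h0 | hs0
  · -- |x| = |y|
    have : |x| * (-Real.log |x|) - |y| * (-Real.log |y|) = 0 := by
      have : |x| = |y| := by linarith [h0.symm]
      rw [this]; ring
    rw [this, abs_zero]
    nlinarith
  · have hg := gmono hs0 hsd hd2
    have hd5 : d ≤ 2 * (d * (-Real.log d)) := by nlinarith
    calc |‖x‖ * (-Real.log |x|) - |y| * (-Real.log |y|)| 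
        ≤ (|x| - |y|) * (-Real.log (|x| - |y|)) + (|x| - |y|) := hk
      _ ≤ (d * (-Real.log d) + d) + d := by
          have := hg
          nlinarith
      _ ≤ 5 * d * (-Real.log d) := by nlinarith

/-- The projection onto the first coordinate restricted to the graph of
`f(x) = |x|·|log|x||` is, near the origin, a bi-log-Lipschitz homeomorphism onto a ball;
in particular the graph is log-Lipschitz regular at `0`. -/
theorem stmt_5 :
    ∃ r > (0:ℝ), ∃ C > (0:ℝ),
      Set.BijOn Prod.fst {p : ℝ × ℝ | p.2 = flog p.1 ∧ |p.1| < r} (Metric.ball (0:ℝ) r) ∧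
      ContinuousOn (fun x : ℝ => (x, flog x)) (Metric.ball (0:ℝ) r) ∧
      (∀ p ∈ {p : ℝ × ℝ | p.2 = flog p.1 ∧ |p.1| < r},
        ∀ q ∈ {p : ℝ × ℝ | p.2 = flog p.1 ∧ |p.1| < r},
          0 < dist p q → dist p q < 1/2 →
            dist p.1 q.1 ≤ C * dist p q * |Real.log (dist p q)|) ∧
      (∀ x ∈ Metric.ball (0:ℝ) r, ∀ y ∈ Metric.ball (0:ℝ) r,
          0 < dist x y → dist x y < 1/2 →
            dist (x, flog x) (y, flog y) ≤ C * dist x y * |Real.log (dist x y)|) := by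
  refine ⟨1/4, by norm_num, 5, by norm_num, ?_, ?_, ?_, ?_⟩
  · refine ⟨?_, ?_, ?_⟩
    · intro p hp
      simp only [mem_setOf_eq] at hp
      rw [mem_ball, Real.dist_eq, sub_zero]
      exact hp.2
    · intro p hp q hq hpq
      simp only [mem_setOf_eq] at hp hq
      exact Prod.ext hpq (by rw [hp.1, hq.1, hpq])
    · intro x hx
      simp only [mem_ball, Real.dist_eq, sub_zero] at hx
      exact ⟨(x, flog x), ⟨rfl, hx⟩, rfl⟩
  · have hc : Continuous flog := by
      have : flog = fun x => |(|x| * Real.log |x|)| := by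
        funext x; simp [flog, abs_mul, abs_abs]
      rw [this]
      exact continuous_abs.comp (Real.continuous_mul_log.comp continuous_abs)
    exact (continuous_id.prodMk hc).continuousOn
  · intro p hp q hq hd hd2
    have hlb : (1:ℝ)/2 ≤ -Real.log (dist p q) := log_half_bound hd hd2
    have h1 : dist p.1 q.1 ≤ dist p q := by
      rw [Prod.dist_eq]; exact le_max_left _ _
    have hlabs : |Real.log (dist p q)| = -Real.log (dist p q) := by
      rw [abs_of_nonpos]; linarith
    rw [hlabs]
    nlinarith
  · intro x hx y hy hd hd2
    simp only [mem_ball, Real.dist_eq, sub_zero] at hx hy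
    rw [Real.dist_eq] at hd hd2 ⊢
    have hlb : (1:ℝ)/2 ≤ -Real.log |x - y| := log_half_bound hd hd2
    have hlabs : abs (Real.log |x - y|) = -Real.log |x - y| := by
      rw [abs_of_nonpos]; linarith
    rw [hlabs, Prod.dist_eq, Real.dist_eq, Real.dist_eq]
    have h2 := main_est hx.le hy.le hd hd2
    apply max_le
    · nlinarith
    · linarith
end

section
/- The graph X of f(x) = |x|·|log|x|| (with f(0)=0) is not Lipschitz normally embedded at 0; that is, for every neighborhood U of 0 and every C ≥ 1 there exist points x₁, x₂ ∈ X ∩ U with d_{X∩U, inn}(x₁, x₂) > C‖x₁ − x₂‖. -/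
open Set Metric ENNReal Topology

/-!
The points `(±x, x·|log x|)` of the graph are at distance `2x` from each other, but the graph
is disconnected by removing the origin, so every path between them inside the graph passes
through `(0, 0)` and has length at least `2x·|log x|`. The ratio `|log x|` is unbounded
as `x → 0⁺`.
-/

theorem eVariationOn.edist_add_edist_le {E : Type*} [PseudoEMetricSpace E] (γ : ℝ → E)
    {a s b : ℝ} (hs : s ∈ Icc a b) :
    edist (γ a) (γ s) + edist (γ s) (γ b) ≤ eVariationOn γ (Icc a b) := by
  calc edist (γ a) (γ s) + edist (γ s) (γ b)
      ≤ eVariationOn γ (univ ∩ Icc a s) + eVariationOn γ (univ ∩ Icc s b) :=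
        add_le_add
          (eVariationOn.edist_le γ ⟨trivial, le_rfl, hs.1⟩ ⟨trivial, hs.1, le_rfl⟩)
          (eVariationOn.edist_le γ ⟨trivial, le_rfl, hs.2⟩ ⟨trivial, hs.2, le_rfl⟩)
    _ = eVariationOn γ (Icc a b) := by
        rw [eVariationOn.Icc_add_Icc γ hs.1 hs.2 (mem_univ s), univ_inter]

theorem edist_add_edist_le_innerDist {E : Type*} [NormedAddCommGroup E] {X : Set E} {x y z : E}
    (hz : ∀ γ : ℝ → E, ContinuousOn γ (Icc 0 1) → γ 0 = x → γ 1 = y →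
      (∀ t ∈ Icc (0 : ℝ) 1, γ t ∈ X) → ∃ s ∈ Icc (0 : ℝ) 1, γ s = z) :
    edist x z + edist z y ≤ innerDist X x y := by
  refine le_iInf₂ fun γ ⟨hγ, hγ0, hγ1, hγX⟩ => ?_
  obtain ⟨s, hs, rfl⟩ := hz γ hγ hγ0 hγ1 hγX
  rw [← hγ0, ← hγ1]
  exact eVariationOn.edist_add_edist_le γ hs

theorem exists_apply_eq_of_subset_graph {g : ℝ → ℝ} {X : Set (ℝ × ℝ)}
    (hX : X ⊆ {p | p.2 = g p.1}) {γ : ℝ → ℝ × ℝ} (hγ : ContinuousOn γ (Icc 0 1))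
    (hγX : ∀ t ∈ Icc (0 : ℝ) 1, γ t ∈ X) {c : ℝ} (hc : c ∈ uIcc (γ 0).1 (γ 1).1) :
    ∃ s ∈ Icc (0 : ℝ) 1, γ s = (c, g c) := by
  have hγ₁ : ContinuousOn (fun t => (γ t).1) (uIcc 0 1) := by
    rw [uIcc_of_le zero_le_one]
    exact continuous_fst.comp_continuousOn hγ
  obtain ⟨s, hs, hsc⟩ := intermediate_value_uIcc hγ₁ hc
  rw [uIcc_of_le zero_le_one] at hs
  refine ⟨s, hs, Prod.ext hsc ?_⟩
  rw [← hsc]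
  exact hX (hγX s hs)

theorem edist_add_edist_le_innerDist_of_subset_graph {g : ℝ → ℝ} {X : Set (ℝ × ℝ)}
    (hX : X ⊆ {p | p.2 = g p.1}) {p q : ℝ × ℝ} {c : ℝ} (hc : c ∈ uIcc p.1 q.1) :
    edist p (c, g c) + edist (c, g c) q ≤ innerDist X p q :=
  edist_add_edist_le_innerDist fun _ hγ hγ0 hγ1 hγX =>
    exists_apply_eq_of_subset_graph hX hγ hγX (by rwa [hγ0, hγ1])

theorem Prod.norm_mk_of_abs_le {a b : ℝ} (h : |a| ≤ b) : ‖(a, b)‖ = b := by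
  rw [Prod.norm_mk, Real.norm_eq_abs, Real.norm_eq_abs, abs_of_nonneg ((abs_nonneg a).trans h),
    max_eq_right h]

theorem ofReal_two_mul_le_innerDist_of_subset_graph {g : ℝ → ℝ} (hg : g 0 = 0)
    {X : Set (ℝ × ℝ)} (hX : X ⊆ {p | p.2 = g p.1}) {x y : ℝ} (hx : 0 ≤ x) (hxy : x ≤ y) :
    ENNReal.ofReal (2 * y) ≤ innerDist X (x, y) (-x, y) := by
  have hnorm : ∀ a, |a| = x → ‖(a, y)‖ = y := fun a ha => Prod.norm_mk_of_abs_le (ha.le.trans hxy)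
  calc ENNReal.ofReal (2 * y) = edist (x, y) (0, g 0) + edist (0, g 0) (-x, y) := by
        rw [hg, edist_comm (0, 0), Prod.mk_zero_zero, edist_zero_right, edist_zero_right,
          ← ofReal_norm, ← ofReal_norm, hnorm x (abs_of_nonneg hx), hnorm (-x) (by simp [hx]),
          ← ENNReal.ofReal_add (hx.trans hxy) (hx.trans hxy), two_mul]
    _ ≤ innerDist X (x, y) (-x, y) :=
        edist_add_edist_le_innerDist_of_subset_graph hX (by simp [hx])

@[simp]
theorem flog_zero : flog 0 = 0 := by simp [flog]

@[simp]
theorem flog_neg (x : ℝ) : flog (-x) = flog x := by simp [flog]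

theorem flog_exp_neg {t : ℝ} (ht : 0 ≤ t) : flog (Real.exp (-t)) = t * Real.exp (-t) := by
  rw [flog, abs_of_pos (Real.exp_pos _), Real.log_exp, abs_neg, abs_of_nonneg ht, mul_comm]

/-- The graph of `f(x) = |x|·|log|x||` is not Lipschitz normally embedded at `0`: for every
neighbourhood `U` of the origin and every `C ≥ 1` there are points `p, q` of the graph in `U`
whose inner distance in the graph exceeds `C‖p − q‖`. -/
theorem stmt_6 :
    ∀ U ∈ 𝓝 ((0, 0) : ℝ × ℝ), ∀ C : ℝ, 1 ≤ C →
      ∃ p ∈ {p : ℝ × ℝ | p.2 = flog p.1} ∩ U, ∃ q ∈ {p : ℝ × ℝ | p.2 = flog p.1} ∩ U,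
        ENNReal.ofReal (C * ‖p - q‖) < innerDist ({p : ℝ × ℝ | p.2 = flog p.1} ∩ U) p q := by
  intro U hU C hC
  obtain ⟨ε, hε, hball⟩ := Metric.mem_nhds_iff.mp hU
  rw [Prod.mk_zero_zero] at hball
  obtain ⟨t, hCt, htxε⟩ := ((Filter.eventually_gt_atTop C).and
    ((Real.tendsto_pow_mul_exp_neg_atTop_nhds_zero 1).eventually (gt_mem_nhds hε))).exists
  set x := Real.exp (-t)
  have hx : 0 < x := Real.exp_pos _
  have hxtx : x ≤ t * x := le_mul_of_one_le_left hx.le (by linarith)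
  have hmem : ∀ a, |a| = x → (a, t * x) ∈ {p : ℝ × ℝ | p.2 = flog p.1} ∩ U := by
    intro a ha
    refine ⟨?_, hball ?_⟩
    · rcases abs_eq hx.le |>.mp ha with rfl | rfl <;> simp [flog_exp_neg (by linarith : 0 ≤ t), x]
    · rw [mem_ball_zero_iff, Prod.norm_mk_of_abs_le (ha.le.trans hxtx)]
      simpa using htxε
  refine ⟨(x, t * x), hmem x (abs_of_pos hx), (-x, t * x), hmem (-x) (by simp [hx.le]), ?_⟩
  have hdist : ‖(x, t * x) - (-x, t * x)‖ = 2 * x := by simp [← two_mul, abs_of_pos hx, hx.le]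
  calc ENNReal.ofReal (C * ‖(x, t * x) - (-x, t * x)‖) < ENNReal.ofReal (2 * (t * x)) := by
        rw [hdist, ENNReal.ofReal_lt_ofReal_iff_of_nonneg (by positivity)]
        nlinarith
    _ ≤ _ := ofReal_two_mul_le_innerDist_of_subset_graph flog_zero inter_subset_left hx.le hxtx
end

section
/- Let X ⊆ ℝ^N be path-connected, and suppose there exist constants M > 0 and β ∈ (0,1] such that d_{X,diam}(u,v) ≤ M‖u−v‖^β for all u,v ∈ X. Suppose also d_{X,inn} ≤ K·d_{X,diam} for some K > 0. If γ₁, γ₂ : (0,ε) → X are arcs such that d_{X,inn}(γ₁(t), γ₂(t)) ≥ c·t for some c > 0 and all small t, and ‖γ₁(t) − γ₂(t)‖ ≤ C·t^b for some b with β·b > 1, then a contradiction follows; i.e., no such pair of arcs exists. -/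
open Set Metric ENNReal Filter Topology

/-!
Chaining the hypotheses gives `c * t ≤ K * M * C ^ β * t ^ (β * b)` for all small `t > 0`;
since `β * b > 1`, the right-hand side is `o(t)` as `t → 0⁺`, which is absurd.
-/

theorem eventually_mul_rpow_lt_mul_self {c e : ℝ} (hc : 0 < c) (he : 1 < e) (D : ℝ) :
    ∀ᶠ t in 𝓝[>] (0:ℝ), D * t ^ e < c * t := by
  have hlim : Tendsto (fun t : ℝ => D * t ^ (e - 1)) (𝓝[>] 0) (𝓝 0) := by
    have h := (Real.continuousAt_rpow_const 0 (e - 1) (Or.inr (by linarith))).tendsto.const_mul D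
    rw [Real.zero_rpow (by linarith), mul_zero] at h
    exact h.mono_left nhdsWithin_le_nhds
  filter_upwards [hlim.eventually (gt_mem_nhds hc), self_mem_nhdsWithin] with t hsmall (ht : 0 < t)
  have hsplit : t ^ e = t ^ (e - 1) * t := by rw [Real.rpow_sub_one ht.ne', div_mul_cancel₀ _ ht.ne']
  rw [hsplit, ← mul_assoc]
  exact mul_lt_mul_of_pos_right hsmall ht

theorem rpow_le_mul_rpow_of_le_mul_rpow {a C t b β : ℝ} (hβ : 0 ≤ β) (hC : 0 ≤ C) (ht : 0 ≤ t)
    (ha0 : 0 ≤ a) (ha : a ≤ C * t ^ b) : a ^ β ≤ C ^ β * t ^ (β * b) := by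
  calc a ^ β ≤ (C * t ^ b) ^ β := Real.rpow_le_rpow ha0 ha hβ
    _ = C ^ β * t ^ (β * b) := by
      rw [Real.mul_rpow hC (Real.rpow_nonneg ht _), mul_comm β, Real.rpow_mul ht]

theorem stmt_10_general {N : ℕ} (X : Set (EuclideanSpace ℝ (Fin N)))
    (M β : ℝ) (hM : 0 < M) (hβ0 : 0 < β)
    (hdiam : ∀ u ∈ X, ∀ v ∈ X, diamDist X u v ≤ ENNReal.ofReal (M * ‖u - v‖ ^ β))
    (K : ℝ) (hK : 0 < K)
    (hinn : ∀ u ∈ X, ∀ v ∈ X, innerDist X u v ≤ ENNReal.ofReal K * diamDist X u v)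
    (ε : ℝ) (hε : 0 < ε) (γ₁ γ₂ : ℝ → EuclideanSpace ℝ (Fin N))
    (hγ₁ : ∀ t ∈ Set.Ioo (0:ℝ) ε, γ₁ t ∈ X) (hγ₂ : ∀ t ∈ Set.Ioo (0:ℝ) ε, γ₂ t ∈ X)
    (c : ℝ) (hc : 0 < c)
    (hlow : ∀ t ∈ Set.Ioo (0:ℝ) ε, ENNReal.ofReal (c * t) ≤ innerDist X (γ₁ t) (γ₂ t))
    (C b : ℝ) (hC : 0 < C) (hβb : 1 < β * b)
    (hupper : ∀ t ∈ Set.Ioo (0:ℝ) ε, ‖γ₁ t - γ₂ t‖ ≤ C * t ^ b) :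
    False := by
  have hle : ∀ t ∈ Ioo (0:ℝ) ε, c * t ≤ K * M * C ^ β * t ^ (β * b) := by
    intro t ht
    have hu := hγ₁ t ht
    have hv := hγ₂ t ht
    have h := (hlow t ht).trans ((hinn _ hu _ hv).trans (mul_le_mul_right (hdiam _ hu _ hv) _))
    rw [← ENNReal.ofReal_mul hK.le, ENNReal.ofReal_le_ofReal_iff (by positivity)] at h
    calc c * t ≤ K * (M * ‖γ₁ t - γ₂ t‖ ^ β) := h
      _ ≤ K * (M * (C ^ β * t ^ (β * b))) := by
          gcongr
          exact rpow_le_mul_rpow_of_le_mul_rpow hβ0.le hC.le ht.1.le (norm_nonneg _) (hupper t ht)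
      _ = K * M * C ^ β * t ^ (β * b) := by ring
  obtain ⟨t, hlt, ht⟩ :=
    ((eventually_mul_rpow_lt_mul_self hc hβb _).and (Ioo_mem_nhdsGT hε)).exists
  exact (hle t ht).not_gt hlt

/-- Order-comparison contradiction: if `d_{X,diam}(u,v) ≤ M‖u−v‖^β`, `d_{X,inn} ≤ K·d_{X,diam}`,
and arcs `γ₁, γ₂ : (0,ε) → X` satisfy `c·t ≤ d_{X,inn}(γ₁ t, γ₂ t)` and
`‖γ₁ t − γ₂ t‖ ≤ C·t^b` with `β·b > 1`, then `False`. -/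
theorem stmt_10 {N : ℕ} (X : Set (EuclideanSpace ℝ (Fin N))) (hX : IsPathConnected X)
    (M β : ℝ) (hM : 0 < M) (hβ0 : 0 < β) (hβ1 : β ≤ 1)
    (hdiam : ∀ u ∈ X, ∀ v ∈ X, diamDist X u v ≤ ENNReal.ofReal (M * ‖u - v‖ ^ β))
    (K : ℝ) (hK : 0 < K)
    (hinn : ∀ u ∈ X, ∀ v ∈ X, innerDist X u v ≤ ENNReal.ofReal K * diamDist X u v)
    (ε : ℝ) (hε : 0 < ε) (γ₁ γ₂ : ℝ → EuclideanSpace ℝ (Fin N))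
    (hγ₁ : ∀ t ∈ Set.Ioo (0:ℝ) ε, γ₁ t ∈ X) (hγ₂ : ∀ t ∈ Set.Ioo (0:ℝ) ε, γ₂ t ∈ X)
    (c : ℝ) (hc : 0 < c)
    (hlow : ∀ t ∈ Set.Ioo (0:ℝ) ε, ENNReal.ofReal (c * t) ≤ innerDist X (γ₁ t) (γ₂ t))
    (C b : ℝ) (hC : 0 < C) (hβb : 1 < β * b)
    (hupper : ∀ t ∈ Set.Ioo (0:ℝ) ε, ‖γ₁ t - γ₂ t‖ ≤ C * t ^ b) :
    False :=
  stmt_10_general X M β hM hβ0 hdiam K hK hinn ε hε γ₁ γ₂ hγ₁ hγ₂ c hc hlow C b hC hβb hupper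
end

section
/- Let X = {(x,y) ∈ ℂ² : xⁿ = y^{n+1}} for an integer n > 1, set b = n/(n+1), and let f : S¹ → X ∩ S³ be a bi-Lipschitz homeomorphism with bi-Lipschitz constant λ ≥ 1, written f = (f₁, f₂). Define F : {u ∈ ℂ : |u| ≤ 1} → X by F(tv) = (t·f₁(v), t^b·f₂(v)) for v ∈ S¹, t ∈ [0,1], and F(0) = 0. Then F is b-Hölder: ‖F(u₁) − F(u₂)‖ ≤ (6λ+3)‖u₁ − u₂‖^b for all u₁, u₂ in the closed unit disc. -/
/-!
Write `u = t • v` with `t = ‖u‖` and `‖v‖ = 1`. The difference `F (t • v₁) - F (s • v₂)` splits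
into an angular part `(t (f₁ v₁ - f₁ v₂), t ^ b (f₂ v₁ - f₂ v₂))`, of norm at most
`λ t ^ b ‖v₁ - v₂‖` because `t ≤ t ^ b`, and a radial part `((t - s) f₁ v₂, (t ^ b - s ^ b) f₂ v₂)`,
of norm at most `|t - s| + |t ^ b - s ^ b| ≤ 2 |t - s| ^ b`. Both are `O(‖t • v₁ - s • v₂‖ ^ b)`:
`|t - s| ≤ ‖t • v₁ - s • v₂‖`, and `t ‖v₁ - v₂‖ ≤ 2 ‖t • v₁ - s • v₂‖` together with
`‖v₁ - v₂‖ ≤ 2` gives `t ^ b ‖v₁ - v₂‖ ≤ 2 ‖t • v₁ - s • v₂‖ ^ b`. The resulting constant is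
`2λ + 2 ≤ 6λ + 3`.
-/

open Set Metric

/-- A point `(a, b)` of Euclidean `ℂ²`. -/
noncomputable def pt2 (a b : ℂ) : EuclideanSpace ℂ (Fin 2) := WithLp.toLp 2 ![a, b]

lemma pt2_sub (a c a' c' : ℂ) : pt2 a c - pt2 a' c' = pt2 (a - a') (c - c') := by
  ext i; fin_cases i <;> simp [pt2]

lemma pt2_add (a c a' c' : ℂ) : pt2 a c + pt2 a' c' = pt2 (a + a') (c + c') := by
  ext i; fin_cases i <;> simp [pt2]

lemma pt2_mul_mul (x a c : ℂ) : pt2 (x * a) (x * c) = x • pt2 a c := by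
  ext i; fin_cases i <;> simp [pt2]

lemma norm_pt2_sq (a c : ℂ) : ‖pt2 a c‖ ^ 2 = ‖a‖ ^ 2 + ‖c‖ ^ 2 := by
  simp [EuclideanSpace.norm_sq_eq, Fin.sum_univ_two, pt2]

lemma norm_pt2_le_add (a c : ℂ) : ‖pt2 a c‖ ≤ ‖a‖ + ‖c‖ := by
  refine le_of_sq_le_sq ?_ (by positivity)
  rw [norm_pt2_sq]
  nlinarith [norm_nonneg a, norm_nonneg c]

lemma norm_pt2_le_norm_pt2 {a c a' c' : ℂ} (ha : ‖a‖ ≤ ‖a'‖) (hc : ‖c‖ ≤ ‖c'‖) :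
    ‖pt2 a c‖ ≤ ‖pt2 a' c'‖ := by
  refine le_of_sq_le_sq ?_ (norm_nonneg _)
  rw [norm_pt2_sq, norm_pt2_sq]
  gcongr

lemma norm_fst_le_norm_pt2 (a c : ℂ) : ‖a‖ ≤ ‖pt2 a c‖ := PiLp.norm_apply_le (pt2 a c) 0

lemma norm_snd_le_norm_pt2 (a c : ℂ) : ‖c‖ ≤ ‖pt2 a c‖ := PiLp.norm_apply_le (pt2 a c) 1

lemma Real.abs_rpow_sub_rpow_le {b s t : ℝ} (hb0 : 0 ≤ b) (hb1 : b ≤ 1) (hs : 0 ≤ s)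
    (ht : 0 ≤ t) : |t ^ b - s ^ b| ≤ |t - s| ^ b := by
  wlog hst : s ≤ t generalizing s t
  · rw [abs_sub_comm, abs_sub_comm t]
    exact this ht hs (le_of_not_ge hst)
  have hsub : t ^ b ≤ (t - s) ^ b + s ^ b := by
    simpa using Real.rpow_add_le_add_rpow (sub_nonneg.2 hst) hs hb0 hb1
  rw [abs_of_nonneg (sub_nonneg.2 (Real.rpow_le_rpow hs hst hb0)),
    abs_of_nonneg (sub_nonneg.2 hst)]
  linarith

lemma Real.rpow_mul_le_of_mul_le {b t w c r : ℝ} (hb0 : 0 ≤ b) (hb1 : b ≤ 1) (ht : 0 ≤ t)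
    (hw : 0 ≤ w) (hwc : w ≤ c) (hr : 0 ≤ r) (htw : t * w ≤ c * r) :
    t ^ b * w ≤ c * r ^ b := by
  have hc : 0 ≤ c := hw.trans hwc
  calc t ^ b * w = (t * w) ^ b * w ^ (1 - b) := by
        rw [Real.mul_rpow ht hw, mul_assoc, ← Real.rpow_add' hw (by norm_num),
          add_sub_cancel, Real.rpow_one]
    _ ≤ (c * r) ^ b * c ^ (1 - b) := by
        gcongr
    _ = c * r ^ b := by
        rw [Real.mul_rpow hc hr, mul_right_comm, ← Real.rpow_add' hc (by norm_num),
          add_sub_cancel, Real.rpow_one]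

section Cone

variable {V : Type*}

/-- The paper's `F (t • v)` for a unit vector `v`. -/
noncomputable def weightedCone (b : ℝ) (f₁ f₂ : V → ℂ) (t : ℝ) (v : V) :
    EuclideanSpace ℂ (Fin 2) :=
  pt2 ((t : ℂ) * f₁ v) (((t ^ b : ℝ) : ℂ) * f₂ v)

lemma weightedCone_zero {b : ℝ} (hb : b ≠ 0) (f₁ f₂ : V → ℂ) (v : V) :
    weightedCone b f₁ f₂ 0 v = 0 := by
  ext i; fin_cases i <;> simp [weightedCone, pt2, Real.zero_rpow hb]

lemma weightedCone_sub_weightedCone (b : ℝ) (f₁ f₂ : V → ℂ) (t s : ℝ) (v₁ v₂ : V) :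
    weightedCone b f₁ f₂ t v₁ - weightedCone b f₁ f₂ s v₂ =
      pt2 (t * (f₁ v₁ - f₁ v₂)) ((t ^ b : ℝ) * (f₂ v₁ - f₂ v₂)) +
        pt2 ((t - s : ℝ) * f₁ v₂) ((t ^ b - s ^ b : ℝ) * f₂ v₂) := by
  rw [weightedCone, weightedCone, pt2_sub, pt2_add]
  push_cast
  ring_nf

variable [NormedAddCommGroup V] [NormedSpace ℝ V]

lemma abs_sub_le_norm_smul_sub_smul {v₁ v₂ : V} (hv₁ : ‖v₁‖ = 1) (hv₂ : ‖v₂‖ = 1) {t s : ℝ}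
    (ht : 0 ≤ t) (hs : 0 ≤ s) : |t - s| ≤ ‖t • v₁ - s • v₂‖ := by
  simpa [norm_smul, hv₁, hv₂, abs_of_nonneg ht, abs_of_nonneg hs]
    using abs_norm_sub_norm_le (t • v₁) (s • v₂)

lemma mul_norm_sub_le_two_mul_norm_smul_sub_smul {v₁ v₂ : V} (hv₁ : ‖v₁‖ = 1)
    (hv₂ : ‖v₂‖ = 1) {t s : ℝ} (ht : 0 ≤ t) (hs : 0 ≤ s) :
    t * ‖v₁ - v₂‖ ≤ 2 * ‖t • v₁ - s • v₂‖ := by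
  have hts := abs_sub_le_norm_smul_sub_smul hv₁ hv₂ ht hs
  calc t * ‖v₁ - v₂‖ = ‖(t • v₁ - s • v₂) + (s - t) • v₂‖ := by
        rw [← norm_smul_of_nonneg ht]
        congr 1; module
    _ ≤ ‖t • v₁ - s • v₂‖ + |t - s| := by
        grw [norm_add_le, norm_smul, hv₂, Real.norm_eq_abs, abs_sub_comm, mul_one]
    _ ≤ 2 * ‖t • v₁ - s • v₂‖ := by linarith

lemma rpow_mul_norm_sub_le {b : ℝ} (hb0 : 0 ≤ b) (hb1 : b ≤ 1) {v₁ v₂ : V} (hv₁ : ‖v₁‖ = 1)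
    (hv₂ : ‖v₂‖ = 1) {t s : ℝ} (ht : 0 ≤ t) (hs : 0 ≤ s) :
    t ^ b * ‖v₁ - v₂‖ ≤ 2 * ‖t • v₁ - s • v₂‖ ^ b := by
  have hdiam : ‖v₁ - v₂‖ ≤ 2 := by linarith [norm_sub_le v₁ v₂]
  exact Real.rpow_mul_le_of_mul_le hb0 hb1 ht (norm_nonneg _) hdiam (norm_nonneg _)
    (mul_norm_sub_le_two_mul_norm_smul_sub_smul hv₁ hv₂ ht hs)

theorem norm_weightedCone_sub_le {b lam : ℝ} (hb0 : 0 ≤ b) (hb1 : b ≤ 1) (hlam : 0 ≤ lam)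
    {f₁ f₂ : V → ℂ} {v₁ v₂ : V} (hv₁ : ‖v₁‖ = 1) (hv₂ : ‖v₂‖ = 1)
    (hf : ‖pt2 (f₁ v₂) (f₂ v₂)‖ ≤ 1)
    (hlip : ‖pt2 (f₁ v₁) (f₂ v₁) - pt2 (f₁ v₂) (f₂ v₂)‖ ≤ lam * ‖v₁ - v₂‖)
    {t s : ℝ} (ht0 : 0 ≤ t) (ht1 : t ≤ 1) (hs0 : 0 ≤ s) (hs1 : s ≤ 1) :
    ‖weightedCone b f₁ f₂ t v₁ - weightedCone b f₁ f₂ s v₂‖ ≤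
      (2 * lam + 2) * ‖t • v₁ - s • v₂‖ ^ b := by
  set r := ‖t • v₁ - s • v₂‖
  have htb : t ≤ t ^ b := Real.self_le_rpow_of_le_one ht0 ht1 hb1
  have hts : |t - s| ≤ r := abs_sub_le_norm_smul_sub_smul hv₁ hv₂ ht0 hs0
  have hts_le : |t - s| ^ b ≤ r ^ b := Real.rpow_le_rpow (abs_nonneg _) hts hb0
  have hangular : ‖pt2 (t * (f₁ v₁ - f₁ v₂)) ((t ^ b : ℝ) * (f₂ v₁ - f₂ v₂))‖ ≤
      lam * (2 * r ^ b) := by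
    calc _ ≤ ‖pt2 ((t ^ b : ℝ) * (f₁ v₁ - f₁ v₂)) ((t ^ b : ℝ) * (f₂ v₁ - f₂ v₂))‖ := by
          refine norm_pt2_le_norm_pt2 ?_ le_rfl
          simp only [norm_mul, Complex.norm_real, Real.norm_eq_abs,
            abs_of_nonneg ht0, abs_of_nonneg (ht0.trans htb)]
          gcongr
      _ = t ^ b * ‖pt2 (f₁ v₁) (f₂ v₁) - pt2 (f₁ v₂) (f₂ v₂)‖ := by
          rw [pt2_mul_mul, norm_smul, Complex.norm_real, Real.norm_eq_abs,
            abs_of_nonneg (ht0.trans htb), pt2_sub]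
      _ ≤ t ^ b * (lam * ‖v₁ - v₂‖) := by gcongr
      _ ≤ lam * (2 * r ^ b) := by
          rw [mul_left_comm]
          exact mul_le_mul_of_nonneg_left (rpow_mul_norm_sub_le hb0 hb1 hv₁ hv₂ ht0 hs0) hlam
  have hradial : ‖pt2 ((t - s : ℝ) * f₁ v₂) ((t ^ b - s ^ b : ℝ) * f₂ v₂)‖ ≤ 2 * r ^ b := by
    have h₁ : |t - s| ≤ |t - s| ^ b :=
      Real.self_le_rpow_of_le_one (abs_nonneg _) (by rw [abs_le]; constructor <;> linarith) hb1
    have h₂ : |t ^ b - s ^ b| ≤ |t - s| ^ b := Real.abs_rpow_sub_rpow_le hb0 hb1 hs0 ht0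
    grw [norm_pt2_le_add, norm_mul, norm_mul, Complex.norm_real, Complex.norm_real,
      norm_fst_le_norm_pt2 .. |>.trans hf, norm_snd_le_norm_pt2 .. |>.trans hf]
    simp only [Real.norm_eq_abs, mul_one]
    linarith
  grw [weightedCone_sub_weightedCone, norm_add_le, hangular, hradial]
  linarith

lemma exists_polar_weightedCone [Nontrivial V] {b : ℝ} (hb : b ≠ 0) (f₁ f₂ : V → ℂ) (u : V) :
    ∃ v : V, ‖v‖ = 1 ∧ ‖u‖ • v = u ∧
      weightedCone b f₁ f₂ ‖u‖ (‖u‖⁻¹ • u) = weightedCone b f₁ f₂ ‖u‖ v := by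
  rcases eq_or_ne u 0 with rfl | hu
  · obtain ⟨v, hv⟩ := exists_norm_eq V zero_le_one
    refine ⟨v, hv, by simp, ?_⟩
    simp only [norm_zero, weightedCone_zero hb]
  · refine ⟨‖u‖⁻¹ • u, ?_, ?_, rfl⟩
    · rw [norm_smul, norm_inv, norm_norm, inv_mul_cancel₀ (norm_ne_zero_iff.2 hu)]
    · rw [smul_smul, mul_inv_cancel₀ (norm_ne_zero_iff.2 hu), one_smul]

end Cone

/-- Let `X = {xⁿ = y^{n+1}} ⊆ ℂ²`, `b = n/(n+1)`, and `f = (f₁, f₂) : S¹ → X ∩ S³` a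
λ-bi-Lipschitz homeomorphism. Then `F(tv) = (t·f₁ v, t^b·f₂ v)` is `b`-Hölder on the closed
unit disc with constant `6λ + 3`. -/
theorem stmt_11 (n : ℕ) (hn : 1 < n) (f₁ f₂ : ℂ → ℂ) (lam : ℝ) (hlam : 1 ≤ lam)
    (hbij : Set.BijOn (fun v => pt2 (f₁ v) (f₂ v)) (Metric.sphere (0:ℂ) 1)
      ({p : EuclideanSpace ℂ (Fin 2) | (p 0) ^ n = (p 1) ^ (n + 1)} ∩
        Metric.sphere (0 : EuclideanSpace ℂ (Fin 2)) 1))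
    (hbil : ∀ v₁ ∈ Metric.sphere (0:ℂ) 1, ∀ v₂ ∈ Metric.sphere (0:ℂ) 1,
      lam⁻¹ * ‖v₁ - v₂‖ ≤ ‖pt2 (f₁ v₁) (f₂ v₁) - pt2 (f₁ v₂) (f₂ v₂)‖ ∧
      ‖pt2 (f₁ v₁) (f₂ v₁) - pt2 (f₁ v₂) (f₂ v₂)‖ ≤ lam * ‖v₁ - v₂‖) :
    let b : ℝ := n / (n + 1)
    let F : ℂ → EuclideanSpace ℂ (Fin 2) := fun u =>
      pt2 ((‖u‖ : ℂ) * f₁ (‖u‖⁻¹ • u)) (((‖u‖ ^ b : ℝ) : ℂ) * f₂ (‖u‖⁻¹ • u))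
    ∀ u₁ u₂ : ℂ, ‖u₁‖ ≤ 1 → ‖u₂‖ ≤ 1 →
      ‖F u₁ - F u₂‖ ≤ (6 * lam + 3) * ‖u₁ - u₂‖ ^ b := by
  intro b F u₁ u₂ h₁ h₂
  have hb0 : 0 < b := by positivity
  have hb1 : b ≤ 1 := (div_le_one (by positivity)).2 (by linarith)
  obtain ⟨v₁, hv₁, hu₁, hF₁⟩ := exists_polar_weightedCone hb0.ne' f₁ f₂ u₁
  obtain ⟨v₂, hv₂, hu₂, hF₂⟩ := exists_polar_weightedCone hb0.ne' f₁ f₂ u₂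
  have hs₁ : v₁ ∈ sphere (0 : ℂ) 1 := mem_sphere_zero_iff_norm.2 hv₁
  have hs₂ : v₂ ∈ sphere (0 : ℂ) 1 := mem_sphere_zero_iff_norm.2 hv₂
  have hf : ‖pt2 (f₁ v₂) (f₂ v₂)‖ ≤ 1 := (mem_sphere_zero_iff_norm.1 (hbij.mapsTo hs₂).2).le
  calc ‖F u₁ - F u₂‖
      = ‖weightedCone b f₁ f₂ ‖u₁‖ v₁ - weightedCone b f₁ f₂ ‖u₂‖ v₂‖ := by
        rw [← hF₁, ← hF₂]; rfl
    _ ≤ (2 * lam + 2) * ‖‖u₁‖ • v₁ - ‖u₂‖ • v₂‖ ^ b :=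
        norm_weightedCone_sub_le hb0.le hb1 (by linarith) hv₁ hv₂ hf
          (hbil v₁ hs₁ v₂ hs₂).2 (norm_nonneg _) h₁ (norm_nonneg _) h₂
    _ ≤ (6 * lam + 3) * ‖u₁ - u₂‖ ^ b := by
        rw [hu₁, hu₂]
        exact mul_le_mul_of_nonneg_right (by linarith) (by positivity)
end

section
/- Let V ⊆ ℂⁿ be a set, ι(x) = x/‖x‖², and A = ι(V \ {0}) ∪ {0}. Then the tangent cone of V at infinity equals the tangent cone of A at 0: C(V, ∞) = C(A, 0). -/
open Set Metric Filter Topology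

/-- The tangent cone of `X` at `p`: limits of `(xⱼ − p)/tⱼ` with `xⱼ ∈ X`, `tⱼ → 0⁺`. -/
def tangentConeSeqAt {E : Type*} [NormedAddCommGroup E] [NormedSpace ℝ E]
    (X : Set E) (p : E) : Set E :=
  {v | ∃ (x : ℕ → E) (t : ℕ → ℝ), (∀ j, x j ∈ X) ∧ (∀ j, 0 < t j) ∧
    Tendsto t atTop (𝓝 0) ∧ Tendsto (fun j => (t j)⁻¹ • (x j - p)) atTop (𝓝 v)}

/-- The tangent cone of `V` at infinity: limits of `xⱼ/tⱼ` with `xⱼ ∈ V`, `tⱼ → +∞`. -/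
def tangentConeAtInfty {E : Type*} [NormedAddCommGroup E] [NormedSpace ℝ E]
    (V : Set E) : Set E :=
  {v | ∃ (x : ℕ → E) (t : ℕ → ℝ), (∀ j, x j ∈ V) ∧ (∀ j, 0 < t j) ∧
    Tendsto t atTop atTop ∧ Tendsto (fun j => (t j)⁻¹ • x j) atTop (𝓝 v)}

/-!
The inversion `ι` carries a sequence `xⱼ` with `xⱼ / tⱼ → v ≠ 0` to the sequence `ι xⱼ`, and
`ι xⱼ / sⱼ → v` again for the rescaled times `sⱼ = tⱼ / ‖xⱼ‖²`, by the identity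
`(t / ‖x‖²)⁻¹ • ι x = t⁻¹ • x`. Since `‖xⱼ‖ ≈ tⱼ ‖v‖`, we have `sⱼ ≈ 1 / (tⱼ ‖v‖²)`, so times
tending to `+∞` become times tending to `0⁺` and vice versa; as `ι` is an involution of `E \ {0}`
this gives both inclusions for `v ≠ 0`.
-/

section

variable {E : Type*} [NormedAddCommGroup E] [NormedSpace ℝ E]

noncomputable def unitInversion (x : E) : E := (‖x‖ ^ 2)⁻¹ • x

lemma norm_unitInversion (x : E) : ‖unitInversion x‖ = ‖x‖⁻¹ := by
  rcases eq_or_ne x 0 with rfl | hx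
  · simp [unitInversion]
  have : ‖x‖ ≠ 0 := norm_ne_zero_iff.2 hx
  rw [unitInversion, norm_smul, norm_inv, norm_pow, norm_norm]
  field_simp

lemma unitInversion_unitInversion {x : E} (hx : x ≠ 0) :
    unitInversion (unitInversion x) = x := by
  have : ‖x‖ ≠ 0 := norm_ne_zero_iff.2 hx
  rw [unitInversion, norm_unitInversion, unitInversion, smul_smul, inv_pow, inv_inv,
    mul_inv_cancel₀ (pow_ne_zero 2 this), one_smul]

lemma unitInversion_mem_of_mem_image {V : Set E} {x : E}
    (hx : x ∈ unitInversion '' (V \ {0})) : unitInversion x ∈ V := by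
  obtain ⟨y, ⟨hyV, hy0⟩, rfl⟩ := hx
  rwa [unitInversion_unitInversion hy0]

lemma inv_div_norm_sq_smul_unitInversion (t : ℝ) {x : E} (hx : x ≠ 0) :
    (t / ‖x‖ ^ 2)⁻¹ • unitInversion x = t⁻¹ • x := by
  have : ‖x‖ ≠ 0 := norm_ne_zero_iff.2 hx
  rw [unitInversion, smul_smul]
  congr 1
  field_simp

lemma div_norm_sq_eq_inv_mul (t : ℝ) (x : E) :
    t / ‖x‖ ^ 2 = t⁻¹ * (‖t⁻¹ • x‖ ^ 2)⁻¹ := by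
  rcases eq_or_ne t 0 with rfl | ht
  · simp
  rw [norm_smul, norm_inv, Real.norm_eq_abs, mul_pow, inv_pow, sq_abs]
  rcases eq_or_ne ‖x‖ 0 with hx | hx
  · simp [hx]
  field_simp

variable {ι : Type*} {l : Filter ι} {x : ι → E} {t : ι → ℝ} {v : E}

lemma eventually_ne_zero_of_tendsto_inv_smul (hv : v ≠ 0)
    (hlim : Tendsto (fun j => (t j)⁻¹ • x j) l (𝓝 v)) : ∀ᶠ j in l, x j ≠ 0 :=
  (hlim.eventually_ne hv).mono fun _ h => right_ne_zero_of_smul h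

lemma tendsto_inv_norm_sq_inv_smul (hv : v ≠ 0)
    (hlim : Tendsto (fun j => (t j)⁻¹ • x j) l (𝓝 v)) :
    Tendsto (fun j => (‖(t j)⁻¹ • x j‖ ^ 2)⁻¹) l (𝓝 (‖v‖ ^ 2)⁻¹) :=
  (hlim.norm.pow 2).inv₀ (pow_ne_zero 2 (norm_ne_zero_iff.2 hv))

lemma tendsto_inv_div_norm_sq_smul_unitInversion (hv : v ≠ 0)
    (hlim : Tendsto (fun j => (t j)⁻¹ • x j) l (𝓝 v)) :
    Tendsto (fun j => (t j / ‖x j‖ ^ 2)⁻¹ • unitInversion (x j)) l (𝓝 v) :=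
  hlim.congr' <| (eventually_ne_zero_of_tendsto_inv_smul hv hlim).mono fun j hj =>
    (inv_div_norm_sq_smul_unitInversion (t j) hj).symm

lemma eventually_div_norm_sq_pos (hv : v ≠ 0) (ht : ∀ j, 0 < t j)
    (hlim : Tendsto (fun j => (t j)⁻¹ • x j) l (𝓝 v)) : ∀ᶠ j in l, 0 < t j / ‖x j‖ ^ 2 :=
  (eventually_ne_zero_of_tendsto_inv_smul hv hlim).mono fun j hj =>
    div_pos (ht j) (pow_pos (norm_pos_iff.2 hj) 2)

end

section

variable {E : Type*} [NormedAddCommGroup E] [NormedSpace ℝ E]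

lemma mem_tangentConeAtInfty_of_eventually {V : Set E} {x : ℕ → E} {t : ℕ → ℝ} {v : E}
    (hx : ∀ᶠ j in atTop, x j ∈ V) (ht : ∀ᶠ j in atTop, 0 < t j) (htT : Tendsto t atTop atTop)
    (hlim : Tendsto (fun j => (t j)⁻¹ • x j) atTop (𝓝 v)) : v ∈ tangentConeAtInfty V := by
  obtain ⟨N, hN⟩ := eventually_atTop.1 (hx.and ht)
  exact ⟨fun j => x (j + N), fun j => t (j + N), fun j => (hN _ (Nat.le_add_left N j)).1,
    fun j => (hN _ (Nat.le_add_left N j)).2, htT.comp (tendsto_add_atTop_nat N),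
    hlim.comp (tendsto_add_atTop_nat N)⟩

lemma mem_tangentConeSeqAt_of_eventually {X : Set E} {p : E} {x : ℕ → E} {t : ℕ → ℝ} {v : E}
    (hx : ∀ᶠ j in atTop, x j ∈ X) (ht : ∀ᶠ j in atTop, 0 < t j) (ht0 : Tendsto t atTop (𝓝 0))
    (hlim : Tendsto (fun j => (t j)⁻¹ • (x j - p)) atTop (𝓝 v)) :
    v ∈ tangentConeSeqAt X p := by
  obtain ⟨N, hN⟩ := eventually_atTop.1 (hx.and ht)
  exact ⟨fun j => x (j + N), fun j => t (j + N), fun j => (hN _ (Nat.le_add_left N j)).1,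
    fun j => (hN _ (Nat.le_add_left N j)).2, ht0.comp (tendsto_add_atTop_nat N),
    hlim.comp (tendsto_add_atTop_nat N)⟩

lemma zero_mem_tangentConeAtInfty {V : Set E} (hV : V.Nonempty) : 0 ∈ tangentConeAtInfty V := by
  obtain ⟨x, hx⟩ := hV
  refine ⟨fun _ => x, fun j => (j : ℝ) + 1, fun _ => hx, fun j => by positivity,
    tendsto_atTop_add_const_right _ 1 tendsto_natCast_atTop_atTop, ?_⟩
  simpa using (tendsto_one_div_add_atTop_nhds_zero_nat (𝕜 := ℝ)).smul_const x

lemma zero_mem_tangentConeSeqAt {X : Set E} {p : E} (hp : p ∈ X) : 0 ∈ tangentConeSeqAt X p :=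
  ⟨fun _ => p, fun j => 1 / ((j : ℝ) + 1), fun _ => hp, fun j => by positivity,
    tendsto_one_div_add_atTop_nhds_zero_nat, by simp⟩

lemma mem_tangentConeSeqAt_of_mem_tangentConeAtInfty {V : Set E} {v : E} (hv : v ≠ 0)
    (h : v ∈ tangentConeAtInfty V) :
    v ∈ tangentConeSeqAt (unitInversion '' (V \ {0}) ∪ {0}) 0 := by
  obtain ⟨x, t, hxV, ht, htT, hlim⟩ := h
  have hratio : Tendsto (fun j => t j / ‖x j‖ ^ 2) atTop (𝓝 0) := by
    have := htT.inv_tendsto_atTop.mul (tendsto_inv_norm_sq_inv_smul hv hlim)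
    rw [zero_mul] at this
    exact this.congr fun j => (div_norm_sq_eq_inv_mul (t j) (x j)).symm
  refine mem_tangentConeSeqAt_of_eventually ?_ (eventually_div_norm_sq_pos hv ht hlim) hratio
    (by simpa only [sub_zero] using tendsto_inv_div_norm_sq_smul_unitInversion hv hlim)
  filter_upwards [eventually_ne_zero_of_tendsto_inv_smul hv hlim] with j hj
  exact Or.inl ⟨x j, ⟨hxV j, hj⟩, rfl⟩

lemma mem_tangentConeAtInfty_of_mem_tangentConeSeqAt {V : Set E} {v : E} (hv : v ≠ 0)
    (h : v ∈ tangentConeSeqAt (unitInversion '' (V \ {0}) ∪ {0}) 0) :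
    v ∈ tangentConeAtInfty V := by
  obtain ⟨a, s, haA, hs, hs0, hlim⟩ := h
  simp only [sub_zero] at hlim
  have hs_inv : Tendsto (fun j => (s j)⁻¹) atTop atTop :=
    (tendsto_nhdsWithin_iff.2 ⟨hs0, Eventually.of_forall hs⟩).inv_tendsto_nhdsGT_zero
  have hratio : Tendsto (fun j => s j / ‖a j‖ ^ 2) atTop atTop := by
    refine (hs_inv.atTop_mul_pos (inv_pos.2 (pow_pos (norm_pos_iff.2 hv) 2))
      (tendsto_inv_norm_sq_inv_smul hv hlim)).congr fun j => ?_
    exact (div_norm_sq_eq_inv_mul (s j) (a j)).symm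
  refine mem_tangentConeAtInfty_of_eventually ?_ (eventually_div_norm_sq_pos hv hs hlim) hratio
    (tendsto_inv_div_norm_sq_smul_unitInversion hv hlim)
  filter_upwards [eventually_ne_zero_of_tendsto_inv_smul hv hlim] with j hj
  exact unitInversion_mem_of_mem_image ((haA j).resolve_right hj)

theorem tangentConeAtInfty_eq_tangentConeSeqAt_unitInversion {V : Set E} (hV : V.Nonempty) :
    tangentConeAtInfty V = tangentConeSeqAt (unitInversion '' (V \ {0}) ∪ {0}) 0 := by
  ext v
  rcases eq_or_ne v 0 with rfl | hv
  · exact iff_of_true (zero_mem_tangentConeAtInfty hV) (zero_mem_tangentConeSeqAt (Or.inr rfl))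
  · exact ⟨mem_tangentConeSeqAt_of_mem_tangentConeAtInfty hv,
      mem_tangentConeAtInfty_of_mem_tangentConeSeqAt hv⟩

end

/-- For a nonempty `V ⊆ ℂⁿ` and `A = ι(V \ {0}) ∪ {0}` with `ι(x) = x/‖x‖²`, the tangent cone
of `V` at infinity equals the tangent cone of `A` at `0`. -/
theorem stmt_16 {n : ℕ} (V : Set (EuclideanSpace ℂ (Fin n))) (hV : V.Nonempty) :
    tangentConeAtInfty V =
      tangentConeSeqAt
        ((fun x : EuclideanSpace ℂ (Fin n) => (‖x‖ ^ 2)⁻¹ • x) '' (V \ {0}) ∪ {0}) 0 :=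
  tangentConeAtInfty_eq_tangentConeSeqAt_unitInversion hV
end

section
/- Let X ⊆ ℂ^N be a closed set, Σ ⊆ ℂ^d a set with 0 ∈ Σ̄, and p : X → ℂ^d a proper continuous map such that p : X \ p⁻¹(Σ) → Δ' \ Σ is a covering map of degree k ≥ 2 onto a punctured neighborhood. Suppose v is a unit vector and η, δ > 0 are such that the cone C_{η,δ} = {w : ‖w − tv‖ < ηt for some t ∈ (0,δ)} is disjoint from Σ and simply connected. If γ₁, γ₂ : [0,ε) → X are distinct lifts of t ↦ tv and p is 1-Lipschitz, then every path β in X from γ₁(t) to γ₂(t) satisfies length(β) ≥ length(p∘β) ≥ 2ηt; hence d_{X,inn}(γ₁(t), γ₂(t)) ≥ 2ηt. -/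
open Set Metric ENNReal Filter Topology

/-- The open cone `C_{η,δ} = {w : ‖w − t·v‖ < η·t for some t ∈ (0,δ)}` about direction `v`. -/
def dirCone {F : Type*} [NormedAddCommGroup F] [NormedSpace ℝ F]
    (v : F) (η δ : ℝ) : Set F :=
  {w | ∃ t ∈ Set.Ioo (0:ℝ) δ, ‖w - t • v‖ < η * t}

/-!
Over the simply connected cone the covering is trivial: a path `β` in `X` between two distinct
points of the fibre over `t • v` lifts a loop at `t • v`, and if that loop stayed in the cone it
would be null-homotopic there, so by homotopy lifting `β` would be a closed path. Hence `P ∘ β`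
leaves the cone, i.e. reaches a point at distance `≥ η t` from `t • v`, and goes out and back
again; `P` being 1-Lipschitz, `β` is at least as long as `P ∘ β`.
-/

open unitInterval

namespace IsCoveringMap

variable {E B Y : Type*} [TopologicalSpace E] [TopologicalSpace B] [TopologicalSpace Y] {p : E → B}

theorem source_eq_target_of_lifts_loop [SimplyConnectedSpace Y] (cov : IsCoveringMap p)
    (g : C(Y, B)) {y : Y} (c : Path y y) {e₀ e₁ : E} (Γ : Path e₀ e₁)
    (hΓ : ∀ s, p (Γ s) = g (c s)) : e₀ = e₁ := by
  have hy : g y = p e₀ := by rw [← Γ.source, hΓ, c.source]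
  have hc : (c.map g.continuous).toContinuousMap 0 = p e₀ := (Path.source _).trans hy
  have hΓlift : Γ.toContinuousMap = cov.liftPath _ e₀ hc :=
    (cov.eq_liftPath_iff' hc).2 ⟨funext hΓ, Γ.source⟩
  calc e₀ = cov.liftPath (.const I (g y)) e₀ hy 1 := by rw [cov.liftPath_const hy]; rfl
    _ = cov.liftPath _ e₀ hc 1 :=
      cov.liftPath_apply_one_eq_of_homotopicRel
        ((SimplyConnectedSpace.paths_homotopic (Path.refl y) c).map g) e₀ hy hc
    _ = e₁ := by rw [← hΓlift]; exact Γ.target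

end IsCoveringMap

theorem exists_comp_notMem_of_ne {E F : Type*} [TopologicalSpace E] [TopologicalSpace F]
    {X : Set E} {P : E → F} (hP : Continuous P) {V K : Set F} (hKV : K ⊆ V)
    [SimplyConnectedSpace K]
    (cov : IsCoveringMap fun z : {z // z ∈ X ∧ P z ∈ V} => (⟨P z.1, z.2.2⟩ : {w // w ∈ V}))
    {β : ℝ → E} (hβ : ContinuousOn β (Icc 0 1)) (hβX : ∀ s ∈ Icc (0:ℝ) 1, β s ∈ X)
    (hP01 : P (β 0) = P (β 1)) (hne : β 0 ≠ β 1) : ∃ s ∈ Icc (0:ℝ) 1, P (β s) ∉ K := by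
  by_contra! hK
  have hβI : Continuous fun s : I => β s := hβ.domRestrict
  have h0 : (0:ℝ) ∈ Icc 0 1 := left_mem_Icc.2 zero_le_one
  have h1 : (1:ℝ) ∈ Icc 0 1 := right_mem_Icc.2 zero_le_one
  let Γ : Path (⟨β 0, hβX 0 h0, hKV (hK 0 h0)⟩ : {z // z ∈ X ∧ P z ∈ V})
      ⟨β 1, hβX 1 h1, hKV (hK 1 h1)⟩ :=
    { toFun s := ⟨β s, hβX s s.2, hKV (hK s s.2)⟩
      continuous_toFun := hβI.subtype_mk _
      source' := rfl
      target' := rfl }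
  let c : Path (⟨P (β 0), hK 0 h0⟩ : K) ⟨P (β 0), hK 0 h0⟩ :=
    { toFun s := ⟨P (β s), hK s s.2⟩
      continuous_toFun := (hP.comp hβI).subtype_mk _
      source' := rfl
      target' := Subtype.ext hP01.symm }
  let g : C(K, V) := ⟨fun w => ⟨w, hKV w.2⟩, continuous_subtype_val.subtype_mk _⟩
  exact hne (congrArg Subtype.val (cov.source_eq_target_of_lifts_loop g c Γ fun _ => rfl))

theorem eVariationOn.ofReal_two_mul_le_of_loop {α M : Type*} [LinearOrder α]
    [PseudoMetricSpace M] (f : α → M) {a b s : α} (hs : s ∈ Icc a b) {x : M} (ha : f a = x)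
    (hb : f b = x) {r : ℝ} (hr : r ≤ dist (f s) x) :
    ENNReal.ofReal (2 * r) ≤ eVariationOn f (Icc a b) :=
  calc ENNReal.ofReal (2 * r) ≤ ENNReal.ofReal r + ENNReal.ofReal r := by
        rw [two_mul]; exact ENNReal.ofReal_add_le
    _ ≤ edist (f a) (f s) + edist (f s) (f b) := by
        rw [edist_dist, edist_dist, ha, hb, dist_comm x]
        gcongr
    _ ≤ eVariationOn f (Icc a b ∩ Icc a s) + eVariationOn f (Icc a b ∩ Icc s b) := by
        gcongr
        · exact eVariationOn.edist_le f ⟨left_mem_Icc.2 (hs.1.trans hs.2), left_mem_Icc.2 hs.1⟩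
            ⟨hs, right_mem_Icc.2 hs.1⟩
        · exact eVariationOn.edist_le f ⟨hs, left_mem_Icc.2 hs.2⟩
            ⟨right_mem_Icc.2 (hs.1.trans hs.2), right_mem_Icc.2 hs.2⟩
    _ = eVariationOn f (Icc a b) := by
        rw [eVariationOn.Icc_add_Icc f hs.1 hs.2 hs, inter_self]

theorem stmt_17_general {N d : ℕ}
    (X : Set (EuclideanSpace ℂ (Fin N)))
    (P : EuclideanSpace ℂ (Fin N) → EuclideanSpace ℂ (Fin d)) (hP : LipschitzWith 1 P)
    (S Δ' : Set (EuclideanSpace ℂ (Fin d)))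
    (v : EuclideanSpace ℂ (Fin d)) (η δ : ℝ)
    (hcone : dirCone v η δ ⊆ Δ' \ S)
    (hsc : SimplyConnectedSpace ↥(dirCone v η δ))
    (hcov : IsCoveringMap
      (fun z : {z : EuclideanSpace ℂ (Fin N) // z ∈ X ∧ P z ∈ Δ' \ S} =>
        (⟨P z.1, z.2.2⟩ : {w : EuclideanSpace ℂ (Fin d) // w ∈ Δ' \ S})))
    (ε : ℝ) (γ₁ γ₂ : ℝ → EuclideanSpace ℂ (Fin N))
    (hγ₁ : ∀ t ∈ Set.Ioo (0:ℝ) ε, γ₁ t ∈ X ∧ P (γ₁ t) = t • v)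
    (hγ₂ : ∀ t ∈ Set.Ioo (0:ℝ) ε, γ₂ t ∈ X ∧ P (γ₂ t) = t • v)
    (hne : ∀ t ∈ Set.Ioo (0:ℝ) ε, γ₁ t ≠ γ₂ t) :
    ∀ t ∈ Set.Ioo (0:ℝ) (min ε δ),
      (∀ β : ℝ → EuclideanSpace ℂ (Fin N), ContinuousOn β (Set.Icc 0 1) →
        β 0 = γ₁ t → β 1 = γ₂ t → (∀ s ∈ Set.Icc (0:ℝ) 1, β s ∈ X) →
          ENNReal.ofReal (2 * η * t) ≤ eVariationOn (P ∘ β) (Set.Icc 0 1) ∧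
          eVariationOn (P ∘ β) (Set.Icc 0 1) ≤ eVariationOn β (Set.Icc 0 1)) ∧
      ENNReal.ofReal (2 * η * t) ≤ innerDist X (γ₁ t) (γ₂ t) := by
  intro t ht
  have htε : t ∈ Ioo 0 ε := ⟨ht.1, ht.2.trans_le (min_le_left _ _)⟩
  have htδ : t ∈ Ioo 0 δ := ⟨ht.1, ht.2.trans_le (min_le_right _ _)⟩
  have hpath : ∀ β : ℝ → EuclideanSpace ℂ (Fin N), ContinuousOn β (Icc 0 1) →
      β 0 = γ₁ t → β 1 = γ₂ t → (∀ s ∈ Icc (0:ℝ) 1, β s ∈ X) →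
      ENNReal.ofReal (2 * η * t) ≤ eVariationOn (P ∘ β) (Icc 0 1) ∧
      eVariationOn (P ∘ β) (Icc 0 1) ≤ eVariationOn β (Icc 0 1) := by
    intro β hβ hβ0 hβ1 hβX
    have hP0 : P (β 0) = t • v := hβ0 ▸ (hγ₁ t htε).2
    have hP1 : P (β 1) = t • v := hβ1 ▸ (hγ₂ t htε).2
    obtain ⟨s, hs, hout⟩ := exists_comp_notMem_of_ne hP.continuous hcone hcov hβ hβX
      (hP0.trans hP1.symm) (hβ0 ▸ hβ1 ▸ hne t htε)
    have hfar : η * t ≤ dist (P (β s)) (t • v) := by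
      rw [dist_eq_norm]; exact not_lt.1 fun h => hout ⟨t, htδ, h⟩
    refine ⟨?_, by simpa using hP.lipschitzOnWith.comp_eVariationOn_le (mapsTo_univ β _)⟩
    rw [mul_assoc]
    exact eVariationOn.ofReal_two_mul_le_of_loop (P ∘ β) hs hP0 hP1 hfar
  refine ⟨hpath, le_iInf₂ fun γ ⟨hγ, hγ0, hγ1, hγX⟩ => ?_⟩
  exact (hpath γ hγ hγ0 hγ1 hγX).1.trans (hpath γ hγ hγ0 hγ1 hγX).2

/-- If `p = P|_X` is a covering of degree `k ≥ 2` away from `Σ`, the cone `C_{η,δ}` about a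
unit direction `v` is disjoint from `Σ` and simply connected, `γ₁ ≠ γ₂` are lifts of `t ↦ t·v`,
and `P` is 1-Lipschitz, then every path `β` in `X` from `γ₁(t)` to `γ₂(t)` satisfies
`length(β) ≥ length(P∘β) ≥ 2ηt`; hence `d_{X,inn}(γ₁(t), γ₂(t)) ≥ 2ηt`. -/
theorem stmt_17 {N d : ℕ}
    (X : Set (EuclideanSpace ℂ (Fin N))) (hXcl : IsClosed X)
    (P : EuclideanSpace ℂ (Fin N) → EuclideanSpace ℂ (Fin d)) (hP : LipschitzWith 1 P)
    (hPcont : Continuous P)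
    (S Δ' : Set (EuclideanSpace ℂ (Fin d))) (hS0 : (0:EuclideanSpace ℂ (Fin d)) ∈ closure S)
    (v : EuclideanSpace ℂ (Fin d)) (hv : ‖v‖ = 1) (η δ : ℝ) (hη : 0 < η) (hδ : 0 < δ)
    (hcone : dirCone v η δ ⊆ Δ' \ S)
    (hsc : SimplyConnectedSpace ↥(dirCone v η δ))
    (hcov : IsCoveringMap
      (fun z : {z : EuclideanSpace ℂ (Fin N) // z ∈ X ∧ P z ∈ Δ' \ S} =>
        (⟨P z.1, z.2.2⟩ : {w : EuclideanSpace ℂ (Fin d) // w ∈ Δ' \ S})))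
    (k : ℕ) (hk : 2 ≤ k)
    (hdeg : ∀ w : {w : EuclideanSpace ℂ (Fin d) // w ∈ Δ' \ S},
      Nat.card {z : {z : EuclideanSpace ℂ (Fin N) // z ∈ X ∧ P z ∈ Δ' \ S} //
        P z.1 = w.1} = k)
    (ε : ℝ) (hε : 0 < ε) (γ₁ γ₂ : ℝ → EuclideanSpace ℂ (Fin N))
    (hγ₁c : ContinuousOn γ₁ (Set.Ioo 0 ε)) (hγ₂c : ContinuousOn γ₂ (Set.Ioo 0 ε))
    (hγ₁ : ∀ t ∈ Set.Ioo (0:ℝ) ε, γ₁ t ∈ X ∧ P (γ₁ t) = t • v)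
    (hγ₂ : ∀ t ∈ Set.Ioo (0:ℝ) ε, γ₂ t ∈ X ∧ P (γ₂ t) = t • v)
    (hne : ∀ t ∈ Set.Ioo (0:ℝ) ε, γ₁ t ≠ γ₂ t) :
    ∀ t ∈ Set.Ioo (0:ℝ) (min ε δ),
      (∀ β : ℝ → EuclideanSpace ℂ (Fin N), ContinuousOn β (Set.Icc 0 1) →
        β 0 = γ₁ t → β 1 = γ₂ t → (∀ s ∈ Set.Icc (0:ℝ) 1, β s ∈ X) →
          ENNReal.ofReal (2 * η * t) ≤ eVariationOn (P ∘ β) (Set.Icc 0 1) ∧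
          eVariationOn (P ∘ β) (Set.Icc 0 1) ≤ eVariationOn β (Set.Icc 0 1)) ∧
      ENNReal.ofReal (2 * η * t) ≤ innerDist X (γ₁ t) (γ₂ t) :=
  stmt_17_general X P hP S Δ' v η δ hcone hsc hcov ε γ₁ γ₂ hγ₁ hγ₂ hne
end
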